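/- arXiv:math/0006100 — 8 statements merged into one kernel-verified Lean document; each statement's English description precedes it below -/
import Mathlib

section
/- Let g ≥ 1 and let a_0, …, a_{2g−1} be complex numbers (a_j := 0 outside {0,…,2g−1}) satisfying Σ_{k∈ℤ} a_{k+2l} · conj(a_k) = 2δ_{l,0} for all l ∈ ℤ. Define b_k := (−1)^k · conj(a_{2g−1−k}) for k ∈ {0,…,2g−1} (b_k := 0 otherwise), and define operators S_0, S_1 on ℓ²(ℤ) by (S_0 ξ)_k = (1/√2) Σ_{l∈ℤ} a_{k−2l} ξ_l and (S_1 ξ)_k = (1/√2) Σ_{l∈ℤ} b_{k−2l} ξ_l. Then S_0 and S_1 satisfy the Cuntz relations: S_j* S_k = δ_{j,k} · Id for j,k ∈ {0,1}, and S_0 S_0* + S_1 S_1* = Id, where S_j* denotes the Hilbert-space adjoint of S_j. -/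
open MeasureTheory Complex Real
open scoped ComplexConjugate

noncomputable section

namespace Stmt2Aux

def Supp (g : ℕ) (p : ℤ → ℂ) : Prop := ∀ j : ℤ, (j < 0 ∨ (2 * g : ℤ) ≤ j) → p j = 0

lemma m1_two_mul (n : ℤ) : ((-1:ℂ))^(2*n) = 1 := by rw [zpow_mul]; norm_num

lemma m1_conj (n : ℤ) : conj ((-1:ℂ)^n) = (-1:ℂ)^n := by rw [map_zpow₀]; norm_num

lemma m1_add (x y : ℤ) : ((-1:ℂ))^(x+y) = (-1:ℂ)^x * (-1:ℂ)^y :=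
  zpow_add₀ (by norm_num) x y


def cc : ℂ := ((Real.sqrt 2 : ℂ))⁻¹

lemma cc_conj : conj cc = cc := by rw [cc, map_inv₀, Complex.conj_ofReal]

lemma cc_sq : cc * cc * 2 = 1 := by
  rw [cc, ← mul_inv]
  norm_cast
  rw [Real.mul_self_sqrt (by norm_num : (0:ℝ) ≤ 2)]
  norm_num

lemma vanish_k {g : ℕ} {p : ℤ → ℂ} (hp : Supp g p) (l : ℤ) :
    ∀ k ∉ Finset.Icc (2*l) (2*l + 2*(g:ℤ)), p (k - 2*l) = 0 := by
  intro k hk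
  apply hp
  simp only [Finset.mem_Icc] at hk
  omega

lemma vanish_l {g : ℕ} {p : ℤ → ℂ} (hp : Supp g p) (k : ℤ) :
    ∀ l ∉ Finset.Icc ((k - 2*(g:ℤ))/2) (k/2 + 1), p (k - 2*l) = 0 := by
  intro l hl
  apply hp
  simp only [Finset.mem_Icc] at hl
  omega

abbrev H : Type := lp (fun _ : ℤ => ℂ) 2

lemma coord_eq_inner (f : H) (i : ℤ) :
    (f : ∀ _ : ℤ, ℂ) i = inner (𝕜 := ℂ) (lp.single 2 i (1:ℂ)) f := by
  rw [lp.inner_single_left, RCLike.inner_apply, map_one, mul_one]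

lemma apply_single (p : ℤ → ℂ) (S : H →L[ℂ] H)
    (hS : ∀ (ξ : H) (k : ℤ), (S ξ : ∀ _ : ℤ, ℂ) k = cc * ∑' l : ℤ, p (k - 2 * l) * ξ l)
    (l k : ℤ) : (S (lp.single 2 l 1) : ∀ _ : ℤ, ℂ) k = cc * p (k - 2 * l) := by
  rw [hS]
  congr 1
  rw [tsum_eq_single l ?_]
  · rw [lp.single_apply_self, mul_one]
  · intro m hm
    rw [lp.single_apply_ne 2 l _ hm, mul_zero]

lemma adjoint_coord (p : ℤ → ℂ) (S : H →L[ℂ] H)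
    (hS : ∀ (ξ : H) (k : ℤ), (S ξ : ∀ _ : ℤ, ℂ) k = cc * ∑' l : ℤ, p (k - 2 * l) * ξ l)
    (η : H) (l : ℤ) :
    ((ContinuousLinearMap.adjoint S) η : ∀ _ : ℤ, ℂ) l
      = cc * ∑' k : ℤ, conj (p (k - 2*l)) * η k := by
  rw [coord_eq_inner, ContinuousLinearMap.adjoint_inner_right, lp.inner_eq_tsum,
    ← tsum_mul_left]
  refine tsum_congr fun k => ?_
  rw [RCLike.inner_apply, apply_single p S hS l k, map_mul, cc_conj]
  ring

variable {g : ℕ}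

lemma comp_coord (p q : ℤ → ℂ) (hp : Supp g p) (hq : Supp g q)
    (S T : H →L[ℂ] H)
    (hS : ∀ (ξ : H) (k : ℤ), (S ξ : ∀ _ : ℤ, ℂ) k = cc * ∑' l : ℤ, p (k - 2 * l) * ξ l)
    (hT : ∀ (ξ : H) (k : ℤ), (T ξ : ∀ _ : ℤ, ℂ) k = cc * ∑' l : ℤ, q (k - 2 * l) * ξ l)
    (ξ : H) (l : ℤ) :
    ((ContinuousLinearMap.adjoint S) (T ξ) : ∀ _ : ℤ, ℂ) l
      = ∑' m : ℤ, (cc * cc * ∑' k : ℤ, conj (p (k - 2*l)) * q (k - 2*m)) * ξ m := by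
  classical
  rw [adjoint_coord p S hS]
  set s : Finset ℤ := Finset.Icc (2*l) (2*l + 2*(g:ℤ)) with hsdef
  have hvanish : ∀ k ∉ s, conj (p (k - 2*l)) * (T ξ : ∀ _ : ℤ, ℂ) k = 0 := by
    intro k hk
    rw [vanish_k hp l k hk, map_zero, zero_mul]
  rw [tsum_eq_sum hvanish]
  have hterm : ∀ k ∈ s, conj (p (k - 2*l)) * (T ξ : ∀ _ : ℤ, ℂ) k
      = ∑' m : ℤ, cc * (conj (p (k - 2*l)) * (q (k - 2*m) * ξ m)) := by
    intro k _
    rw [hT ξ k]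
    rw [show conj (p (k - 2*l)) * (cc * ∑' m : ℤ, q (k - 2*m) * ξ m)
        = (cc * conj (p (k - 2*l))) * ∑' m : ℤ, q (k - 2*m) * ξ m by ring,
      ← tsum_mul_left]
    exact tsum_congr fun m => by ring
  rw [Finset.sum_congr rfl hterm]
  have hsummable : ∀ k ∈ s, Summable (fun m : ℤ => cc * (conj (p (k - 2*l)) * (q (k - 2*m) * ξ m))) := by
    intro k _
    refine summable_of_ne_finset_zero (s := Finset.Icc ((k - 2*(g:ℤ))/2) (k/2 + 1)) ?_
    intro m hm
    rw [vanish_l hq k m hm, zero_mul, mul_zero, mul_zero]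
  rw [← Summable.tsum_finsetSum hsummable, ← tsum_mul_left]
  refine tsum_congr fun m => ?_
  -- cc * ∑ k in s, cc * (conj p * (q * ξ m)) = (cc*cc* ∑' k, conj p * q) * ξ m
  rw [show (cc * cc * ∑' k : ℤ, conj (p (k - 2*l)) * q (k - 2*m)) * ξ m
      = cc * cc * ξ m * ∑' k : ℤ, conj (p (k - 2*l)) * q (k - 2*m) by ring]
  have hvan2 : ∀ k ∉ s, conj (p (k - 2*l)) * q (k - 2*m) = 0 := by
    intro k hk
    rw [vanish_k hp l k hk, map_zero, zero_mul]
  rw [tsum_eq_sum hvan2, Finset.mul_sum, Finset.mul_sum]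
  exact Finset.sum_congr rfl fun k _ => by ring

lemma compT_coord (p q : ℤ → ℂ) (hp : Supp g p) (hq : Supp g q)
    (S T : H →L[ℂ] H)
    (hS : ∀ (ξ : H) (k : ℤ), (S ξ : ∀ _ : ℤ, ℂ) k = cc * ∑' l : ℤ, p (k - 2 * l) * ξ l)
    (hT : ∀ (ξ : H) (k : ℤ), (T ξ : ∀ _ : ℤ, ℂ) k = cc * ∑' l : ℤ, q (k - 2 * l) * ξ l)
    (ξ : H) (k : ℤ) :
    ((S ((ContinuousLinearMap.adjoint T) ξ)) : ∀ _ : ℤ, ℂ) k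
      = ∑' j : ℤ, (cc * cc *
          ∑ l ∈ Finset.Icc ((k - 2*(g:ℤ))/2) (k/2 + 1), p (k - 2*l) * conj (q (j - 2*l))) * ξ j := by
  classical
  rw [hS]
  set s : Finset ℤ := Finset.Icc ((k - 2*(g:ℤ))/2) (k/2 + 1) with hsdef
  have hvanish : ∀ l ∉ s, p (k - 2*l) * ((ContinuousLinearMap.adjoint T) ξ : ∀ _ : ℤ, ℂ) l = 0 := by
    intro l hl
    rw [vanish_l hp k l hl, zero_mul]
  rw [tsum_eq_sum hvanish]
  have hterm : ∀ l ∈ s, p (k - 2*l) * ((ContinuousLinearMap.adjoint T) ξ : ∀ _ : ℤ, ℂ) l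
      = ∑' j : ℤ, cc * (p (k - 2*l) * (conj (q (j - 2*l)) * ξ j)) := by
    intro l _
    rw [adjoint_coord q T hT]
    rw [show p (k - 2*l) * (cc * ∑' j : ℤ, conj (q (j - 2*l)) * ξ j)
        = (cc * p (k - 2*l)) * ∑' j : ℤ, conj (q (j - 2*l)) * ξ j by ring,
      ← tsum_mul_left]
    exact tsum_congr fun j => by ring
  rw [Finset.sum_congr rfl hterm]
  have hsummable : ∀ l ∈ s, Summable (fun j : ℤ => cc * (p (k - 2*l) * (conj (q (j - 2*l)) * ξ j))) := by
    intro l _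
    refine summable_of_ne_finset_zero (s := Finset.Icc (2*l) (2*l + 2*(g:ℤ))) ?_
    intro j hj
    rw [vanish_k hq l j hj, map_zero, zero_mul, mul_zero, mul_zero]
  rw [← Summable.tsum_finsetSum hsummable, ← tsum_mul_left]
  refine tsum_congr fun j => ?_
  rw [show (cc * cc * ∑ l ∈ s, p (k - 2*l) * conj (q (j - 2*l))) * ξ j
      = cc * cc * ξ j * ∑ l ∈ s, p (k - 2*l) * conj (q (j - 2*l)) by ring,
    Finset.mul_sum, Finset.mul_sum]
  exact Finset.sum_congr rfl fun l _ => by ring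

lemma relation_delta (p q : ℤ → ℂ) (hp : Supp g p) (hq : Supp g q)
    (S T : H →L[ℂ] H)
    (hS : ∀ (ξ : H) (k : ℤ), (S ξ : ∀ _ : ℤ, ℂ) k = cc * ∑' l : ℤ, p (k - 2 * l) * ξ l)
    (hT : ∀ (ξ : H) (k : ℤ), (T ξ : ∀ _ : ℤ, ℂ) k = cc * ∑' l : ℤ, q (k - 2 * l) * ξ l)
    (hK : ∀ l m : ℤ, ∑' k : ℤ, conj (p (k - 2*l)) * q (k - 2*m) = if l = m then 2 else 0) :
    ContinuousLinearMap.adjoint S ∘L T = 1 := by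
  refine ContinuousLinearMap.ext fun ξ => ?_
  refine lp.ext ?_
  funext l
  rw [ContinuousLinearMap.comp_apply, ContinuousLinearMap.one_apply]
  show ((ContinuousLinearMap.adjoint S) (T ξ) : ∀ _ : ℤ, ℂ) l = ξ l
  rw [comp_coord p q hp hq S T hS hT ξ l]
  rw [tsum_congr (fun m => by rw [hK l m] :
    ∀ m : ℤ, (cc * cc * ∑' k : ℤ, conj (p (k - 2*l)) * q (k - 2*m)) * ξ m
      = (cc * cc * if l = m then 2 else 0) * ξ m)]
  rw [tsum_eq_single l ?_]
  · simp [cc_sq]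
  · intro m hm
    simp [Ne.symm hm]

lemma relation_zero (p q : ℤ → ℂ) (hp : Supp g p) (hq : Supp g q)
    (S T : H →L[ℂ] H)
    (hS : ∀ (ξ : H) (k : ℤ), (S ξ : ∀ _ : ℤ, ℂ) k = cc * ∑' l : ℤ, p (k - 2 * l) * ξ l)
    (hT : ∀ (ξ : H) (k : ℤ), (T ξ : ∀ _ : ℤ, ℂ) k = cc * ∑' l : ℤ, q (k - 2 * l) * ξ l)
    (hK : ∀ l m : ℤ, ∑' k : ℤ, conj (p (k - 2*l)) * q (k - 2*m) = 0) :
    ContinuousLinearMap.adjoint S ∘L T = 0 := by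
  refine ContinuousLinearMap.ext fun ξ => ?_
  refine lp.ext ?_
  funext l
  rw [ContinuousLinearMap.comp_apply, ContinuousLinearMap.zero_apply]
  show ((ContinuousLinearMap.adjoint S) (T ξ) : ∀ _ : ℤ, ℂ) l = ((0 : H) : ∀ _ : ℤ, ℂ) l
  rw [comp_coord p q hp hq S T hS hT ξ l]
  rw [tsum_congr (fun m => by rw [hK l m] :
    ∀ m : ℤ, (cc * cc * ∑' k : ℤ, conj (p (k - 2*l)) * q (k - 2*m)) * ξ m
      = (cc * cc * 0) * ξ m)]
  simp

lemma completeness (p q : ℤ → ℂ) (hp : Supp g p) (hq : Supp g q)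
    (S T : H →L[ℂ] H)
    (hS : ∀ (ξ : H) (k : ℤ), (S ξ : ∀ _ : ℤ, ℂ) k = cc * ∑' l : ℤ, p (k - 2 * l) * ξ l)
    (hT : ∀ (ξ : H) (k : ℤ), (T ξ : ∀ _ : ℤ, ℂ) k = cc * ∑' l : ℤ, q (k - 2 * l) * ξ l)
    (hK : ∀ k j : ℤ, ∑' l : ℤ, (p (k - 2*l) * conj (p (j - 2*l)) + q (k - 2*l) * conj (q (j - 2*l)))
      = if k = j then 2 else 0) :
    S ∘L ContinuousLinearMap.adjoint S + T ∘L ContinuousLinearMap.adjoint T = 1 := by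
  classical
  refine ContinuousLinearMap.ext fun ξ => ?_
  refine lp.ext ?_
  funext k
  rw [ContinuousLinearMap.add_apply, ContinuousLinearMap.comp_apply,
    ContinuousLinearMap.comp_apply, ContinuousLinearMap.one_apply, lp.coeFn_add,
    Pi.add_apply]
  set s : Finset ℤ := Finset.Icc ((k - 2*(g:ℤ))/2) (k/2 + 1) with hsdef
  rw [compT_coord p p hp hp S S hS hS ξ k, compT_coord q q hq hq T T hT hT ξ k]
  have hsumP : Summable (fun j : ℤ =>
      (cc * cc * ∑ l ∈ s, p (k - 2*l) * conj (p (j - 2*l))) * ξ j) := by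
    refine summable_of_ne_finset_zero
      (s := Finset.Icc (2*((k - 2*(g:ℤ))/2)) (2*(k/2 + 1) + 2*(g:ℤ))) ?_
    intro j hj
    have hz : ∀ l ∈ s, p (k - 2*l) * conj (p (j - 2*l)) = 0 := by
      intro l hl
      have : p (j - 2*l) = 0 := by
        apply hp
        simp only [hsdef, Finset.mem_Icc] at hl hj ⊢
        omega
      rw [this, map_zero, mul_zero]
    rw [Finset.sum_eq_zero hz, mul_zero, zero_mul]
  have hsumQ : Summable (fun j : ℤ =>
      (cc * cc * ∑ l ∈ s, q (k - 2*l) * conj (q (j - 2*l))) * ξ j) := by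
    refine summable_of_ne_finset_zero
      (s := Finset.Icc (2*((k - 2*(g:ℤ))/2)) (2*(k/2 + 1) + 2*(g:ℤ))) ?_
    intro j hj
    have hz : ∀ l ∈ s, q (k - 2*l) * conj (q (j - 2*l)) = 0 := by
      intro l hl
      have : q (j - 2*l) = 0 := by
        apply hq
        simp only [hsdef, Finset.mem_Icc] at hl hj ⊢
        omega
      rw [this, map_zero, mul_zero]
    rw [Finset.sum_eq_zero hz, mul_zero, zero_mul]
  rw [← Summable.tsum_add hsumP hsumQ]
  have hterm : ∀ j : ℤ,
      (cc * cc * ∑ l ∈ s, p (k - 2*l) * conj (p (j - 2*l))) * ξ j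
      + (cc * cc * ∑ l ∈ s, q (k - 2*l) * conj (q (j - 2*l))) * ξ j
      = (cc * cc * if k = j then 2 else 0) * ξ j := by
    intro j
    have hcomb : (∑ l ∈ s, p (k - 2*l) * conj (p (j - 2*l)))
        + (∑ l ∈ s, q (k - 2*l) * conj (q (j - 2*l)))
        = ∑ l ∈ s, (p (k - 2*l) * conj (p (j - 2*l)) + q (k - 2*l) * conj (q (j - 2*l))) :=
      (Finset.sum_add_distrib).symm
    have hext : ∑ l ∈ s, (p (k - 2*l) * conj (p (j - 2*l)) + q (k - 2*l) * conj (q (j - 2*l)))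
        = ∑' l : ℤ, (p (k - 2*l) * conj (p (j - 2*l)) + q (k - 2*l) * conj (q (j - 2*l))) := by
      refine (tsum_eq_sum ?_).symm
      intro l hl
      rw [vanish_l hp k l hl, vanish_l hq k l hl, zero_mul, zero_mul, add_zero]
    calc (cc * cc * ∑ l ∈ s, p (k - 2*l) * conj (p (j - 2*l))) * ξ j
        + (cc * cc * ∑ l ∈ s, q (k - 2*l) * conj (q (j - 2*l))) * ξ j
        = (cc * cc * ((∑ l ∈ s, p (k - 2*l) * conj (p (j - 2*l)))
            + (∑ l ∈ s, q (k - 2*l) * conj (q (j - 2*l))))) * ξ j := by ring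
      _ = (cc * cc * if k = j then 2 else 0) * ξ j := by rw [hcomb, hext, hK k j]
  rw [tsum_congr hterm, tsum_eq_single k ?_]
  · simp [cc_sq]
  · intro j hj
    rw [if_neg (fun h => hj h.symm)]
    simp

variable {g : ℕ} {a b : ℤ → ℂ}

section Kernels

variable (hsupp : Supp g a)
  (horth : ∀ l : ℤ, ∑' k : ℤ, a (k + 2 * l) * conj (a k) = if l = 0 then 2 else 0)
  (hb : ∀ k : ℤ, b k = (-1) ^ k * conj (a (2 * g - 1 - k)))

include horth in
lemma horth' (s : ℤ) : ∑' k : ℤ, conj (a k) * a (k + 2*s) = if s = 0 then 2 else 0 := by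
  have h := congrArg conj (horth (-s))
  rw [Complex.conj_tsum] at h
  simp only [map_mul, RingHom.id_apply, Complex.conj_conj] at h
  have h2 : ∑' (k : ℤ), conj (a (k + 2 * -s)) * a k
      = ∑' (k : ℤ), conj (a k) * a (k + 2*s) := by
    rw [← Equiv.tsum_eq (Equiv.addRight (2*s)) (fun k => conj (a (k + 2 * -s)) * a k)]
    refine tsum_congr fun k => ?_
    simp only [Equiv.coe_addRight]
    rw [show k + 2*s + 2 * -s = k by ring]
  rw [h2] at h
  rw [h]
  by_cases hs : s = 0 <;> simp [hs, map_ofNat]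

include horth in
lemma Kaa (l m : ℤ) :
    ∑' k : ℤ, conj (a (k - 2*l)) * a (k - 2*m) = if l = m then 2 else 0 := by
  rw [← Equiv.tsum_eq (Equiv.addRight (2*l)) (fun k => conj (a (k - 2*l)) * a (k - 2*m))]
  have h : ∀ k : ℤ, conj (a (k + 2*l - 2*l)) * a (k + 2*l - 2*m)
      = conj (a k) * a (k + 2*(l - m)) := by
    intro k; rw [show k + 2*l - 2*l = k by ring, show k + 2*l - 2*m = k + 2*(l-m) by ring]
  simp only [Equiv.coe_addRight]
  rw [tsum_congr h, horth' horth (l - m)]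
  by_cases hlm : l = m <;> simp [hlm, sub_eq_zero, Ne.symm, hlm]

include horth hb in
lemma Kbb (l m : ℤ) :
    ∑' k : ℤ, conj (b (k - 2*l)) * b (k - 2*m) = if l = m then 2 else 0 := by
  have hsummand : ∀ k : ℤ, conj (b (k - 2*l)) * b (k - 2*m)
      = a ((2*(g:ℤ) - 1 - k) + 2*l) * conj (a ((2*(g:ℤ) - 1 - k) + 2*m)) := by
    intro k
    rw [hb (k - 2*l), hb (k - 2*m)]
    simp only [map_mul, m1_conj, Complex.conj_conj]
    have hsign : (-1:ℂ)^(k - 2*l) * (-1:ℂ)^(k - 2*m) = 1 := by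
      rw [← m1_add, show (k - 2*l) + (k - 2*m) = 2*(k - l - m) by ring, m1_two_mul]
    rw [show 2*(g:ℤ) - 1 - (k - 2*l) = (2*(g:ℤ) - 1 - k) + 2*l by ring,
        show 2*(g:ℤ) - 1 - (k - 2*m) = (2*(g:ℤ) - 1 - k) + 2*m by ring]
    calc (-1:ℂ)^(k-2*l) * a ((2*(g:ℤ) - 1 - k) + 2*l) *
          ((-1:ℂ)^(k-2*m) * conj (a ((2*(g:ℤ) - 1 - k) + 2*m)))
        = ((-1:ℂ)^(k-2*l) * (-1:ℂ)^(k-2*m)) *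
          (a ((2*(g:ℤ) - 1 - k) + 2*l) * conj (a ((2*(g:ℤ) - 1 - k) + 2*m))) := by ring
      _ = _ := by rw [hsign, one_mul]
  rw [tsum_congr hsummand]
  set F : ℤ → ℂ := fun u => a (u + 2*l) * conj (a (u + 2*m)) with hF
  have h1 : ∑' k : ℤ, F (2*(g:ℤ) - 1 - k) = ∑' u, F u :=
    Equiv.tsum_eq (Equiv.subLeft (2*(g:ℤ) - 1)) F
  rw [show (fun k : ℤ => a ((2*(g:ℤ) - 1 - k) + 2*l) * conj (a ((2*(g:ℤ) - 1 - k) + 2*m)))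
      = fun k : ℤ => F (2*(g:ℤ) - 1 - k) from rfl, h1]
  rw [← Equiv.tsum_eq (Equiv.subRight (2*m)) F]
  have h2 : ∀ v : ℤ, F (v - 2*m) = a (v + 2*(l - m)) * conj (a v) := by
    intro v
    rw [hF]
    simp only
    rw [show v - 2*m + 2*l = v + 2*(l-m) by ring, show v - 2*m + 2*m = v by ring]
  simp only [Equiv.subRight_apply]
  rw [tsum_congr h2, horth (l - m)]
  by_cases hlm : l = m <;> simp [hlm, sub_eq_zero, Ne.symm]

include hb in
lemma Kab (l m : ℤ) :
    ∑' k : ℤ, conj (a (k - 2*l)) * b (k - 2*m) = 0 := by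
  set f : ℤ → ℂ := fun k => conj (a (k - 2*l)) * b (k - 2*m) with hf
  set t : ℤ := 2*(g:ℤ) - 1 + 2*l + 2*m with ht
  have key : ∀ k : ℤ, f (t - k) = - f k := by
    intro k
    have hsq : (-1:ℂ)^(k - 2*m) * (-1:ℂ)^(k - 2*m) = 1 := by
      rw [← m1_add, show (k - 2*m) + (k - 2*m) = 2*(k - 2*m) by ring, m1_two_mul]
    have hx : (-1:ℂ)^(t - k - 2*m) * (-1:ℂ)^(k - 2*m) = -1 := by
      rw [← m1_add, show (t - k - 2*m) + (k - 2*m) = 2*((g:ℤ) + l - m) + (-1) by omega,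
        m1_add, m1_two_mul, one_mul]
      norm_num
    have hneg : (-1:ℂ)^(t - k - 2*m) = -((-1:ℂ)^(k - 2*m)) := by
      have := congrArg (· * (-1:ℂ)^(k - 2*m)) hx
      rw [mul_assoc, hsq, mul_one] at this
      rw [this]; ring
    rw [hf]
    simp only
    rw [hb (t - k - 2*m), hb (k - 2*m), hneg]
    rw [show 2*(g:ℤ) - 1 - (t - k - 2*m) = k - 2*l by omega,
        show t - k - 2*l = 2*(g:ℤ) - 1 - (k - 2*m) by omega]
    ring
  have h1 : ∑' k : ℤ, f (t - k) = ∑' k, f k := Equiv.tsum_eq (Equiv.subLeft t) f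
  rw [tsum_congr key] at h1
  rw [tsum_neg] at h1
  exact add_self_eq_zero.mp (by linear_combination - h1)

include hb in
lemma Kba (l m : ℤ) :
    ∑' k : ℤ, conj (b (k - 2*l)) * a (k - 2*m) = 0 := by
  have h : ∑' k : ℤ, conj (b (k - 2*l)) * a (k - 2*m)
      = conj (∑' k : ℤ, conj (a (k - 2*m)) * b (k - 2*l)) := by
    rw [Complex.conj_tsum]
    refine tsum_congr fun k => ?_
    simp only [map_mul, Complex.conj_conj]
    ring
  rw [h, Kab hb m l, map_zero]

omit hb

/-- parity splitting of a finitely supported sum over ℤ -/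
lemma parity_split (f : ℤ → ℂ) (s : Finset ℤ) (hfs : ∀ u ∉ s, f u = 0) (j : ℤ) :
    (∑' l : ℤ, f (j + 2*l)) + (∑' l : ℤ, f (j + 1 + 2*l)) = ∑' u : ℤ, f u := by
  classical
  set f1 : ℤ → ℂ := fun u => if Even (u - j) then f u else 0 with hf1
  set f2 : ℤ → ℂ := fun u => if Even (u - j) then 0 else f u with hf2
  have h1 : ∑' l : ℤ, f (j + 2*l) = ∑' u, f1 u := by
    rw [← Function.Injective.tsum_eq (g := fun l : ℤ => j + 2*l)
      (f := f1) (fun x y h => by simp only [] at h; omega) ?_]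
    · exact tsum_congr fun l => by simp [hf1, show Even (j + 2*l - j) from ⟨l, by ring⟩]
    · intro u hu
      simp only [Function.mem_support, hf1] at hu
      have he : Even (u - j) := by by_contra h; simp [h] at hu
      obtain ⟨r, hr⟩ := he
      exact ⟨r, by show j + 2*r = u; omega⟩
  have h2 : ∑' l : ℤ, f (j + 1 + 2*l) = ∑' u, f2 u := by
    rw [← Function.Injective.tsum_eq (g := fun l : ℤ => j + 1 + 2*l)
      (f := f2) (fun x y h => by simp only [] at h; omega) ?_]
    · refine tsum_congr fun l => ?_
      have : ¬ Even (j + 1 + 2*l - j) := by rintro ⟨r, hr⟩; omega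
      simp [hf2, this]
    · intro u hu
      simp only [Function.mem_support, hf2] at hu
      have he : ¬ Even (u - j) := by by_contra h; simp [h] at hu
      have ho : Odd (u - j) := Int.not_even_iff_odd.mp he
      obtain ⟨r, hr⟩ := ho
      exact ⟨r, by show j + 1 + 2*r = u; omega⟩
  have hs1 : Summable f1 := summable_of_ne_finset_zero (s := s)
    (fun u hu => by simp [hf1, hfs u hu])
  have hs2 : Summable f2 := summable_of_ne_finset_zero (s := s)
    (fun u hu => by simp [hf2, hfs u hu])
  rw [h1, h2, ← Summable.tsum_add hs1 hs2]
  refine tsum_congr fun u => ?_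
  by_cases h : Even (u - j) <;> simp [hf1, hf2, h]

include hsupp horth hb in
lemma K5 (k j : ℤ) :
    ∑' l : ℤ, (a (k - 2*l) * conj (a (j - 2*l)) + b (k - 2*l) * conj (b (j - 2*l)))
      = if k = j then 2 else 0 := by
  set F : ℤ → ℂ := fun u => a (u + (k - j)) * conj (a u) with hFdef
  have hFsupp : ∀ u ∉ Finset.Icc (0:ℤ) (2*(g:ℤ)), F u = 0 := by
    intro u hu
    simp only [Finset.mem_Icc] at hu
    have : a u = 0 := hsupp u (by omega)
    simp [hFdef, this]
  have hA : ∀ l : ℤ, a (k - 2*l) * conj (a (j - 2*l)) = F (j - 2*l) := by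
    intro l
    rw [hFdef]
    simp only
    rw [show j - 2*l + (k - j) = k - 2*l by ring]
  have hB : ∀ l : ℤ, b (k - 2*l) * conj (b (j - 2*l))
      = (-1:ℂ)^(k+j) * F (2*(g:ℤ) - 1 - k + 2*l) := by
    intro l
    rw [hb (k - 2*l), hb (j - 2*l), hFdef]
    simp only [map_mul, m1_conj, Complex.conj_conj]
    have hsign : (-1:ℂ)^(k - 2*l) * (-1:ℂ)^(j - 2*l) = (-1:ℂ)^(k+j) := by
      rw [← m1_add, show (k - 2*l) + (j - 2*l) = (k + j) + 2*(-2*l) by ring, m1_add,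
        m1_two_mul, mul_one]
    rw [show 2*(g:ℤ) - 1 - k + 2*l + (k - j) = 2*(g:ℤ) - 1 - (j - 2*l) by ring,
        show 2*(g:ℤ) - 1 - (k - 2*l) = 2*(g:ℤ) - 1 - k + 2*l by ring]
    calc (-1:ℂ)^(k-2*l) * conj (a (2*(g:ℤ) - 1 - k + 2*l)) *
          ((-1:ℂ)^(j-2*l) * a (2*(g:ℤ) - 1 - (j - 2*l)))
        = ((-1:ℂ)^(k-2*l) * (-1:ℂ)^(j-2*l)) *
          (a (2*(g:ℤ) - 1 - (j - 2*l)) * conj (a (2*(g:ℤ) - 1 - k + 2*l))) := by ring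
      _ = _ := by rw [hsign]
  have hsumA : Summable (fun l : ℤ => F (j - 2*l)) := by
    refine summable_of_ne_finset_zero (s := Finset.Icc ((j - 2*(g:ℤ))/2 - 1) (j/2 + 1)) ?_
    intro l hl
    apply hFsupp
    simp only [Finset.mem_Icc] at hl ⊢
    omega
  have hsumB : Summable (fun l : ℤ => (-1:ℂ)^(k+j) * F (2*(g:ℤ) - 1 - k + 2*l)) := by
    refine summable_of_ne_finset_zero
      (s := Finset.Icc ((k + 1 - 2*(g:ℤ))/2 - 1) ((k+1)/2 + 1)) ?_
    intro l hl
    have : F (2*(g:ℤ) - 1 - k + 2*l) = 0 := by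
      apply hFsupp
      simp only [Finset.mem_Icc] at hl ⊢
      omega
    rw [this, mul_zero]
  rw [tsum_congr (fun l => by rw [hA l, hB l] :
    ∀ l : ℤ, a (k - 2*l) * conj (a (j - 2*l)) + b (k - 2*l) * conj (b (j - 2*l))
      = F (j - 2*l) + (-1:ℂ)^(k+j) * F (2*(g:ℤ) - 1 - k + 2*l))]
  rw [Summable.tsum_add hsumA hsumB]
  have hAeq : ∑' l : ℤ, F (j - 2*l) = ∑' l : ℤ, F (j + 2*l) := by
    rw [← Equiv.tsum_eq (Equiv.neg ℤ) (fun l : ℤ => F (j + 2*l))]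
    refine tsum_congr fun l => ?_
    simp only [Equiv.neg_apply]
    rw [show j + 2*(-l) = j - 2*l by ring]
  rw [hAeq, tsum_mul_left]
  rcases Int.even_or_odd (k - j) with ⟨s, hs⟩ | ⟨s, hs⟩
  · -- even case
    have hm1 : (-1:ℂ)^(k+j) = 1 := by
      rw [show k + j = 2*(s + j) by omega, m1_two_mul]
    have hBshift : ∑' l : ℤ, F (2*(g:ℤ) - 1 - k + 2*l) = ∑' l : ℤ, F (j + 1 + 2*l) := by
      rw [← Equiv.tsum_eq (Equiv.addLeft ((g:ℤ) - 1 - s - j)) (fun l : ℤ => F (j + 1 + 2*l))]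
      refine tsum_congr fun l => ?_
      simp only [Equiv.coe_addLeft]
      rw [show j + 1 + 2*((g:ℤ) - 1 - s - j + l) = 2*(g:ℤ) - 1 - k + 2*l by omega]
    rw [hBshift, hm1, one_mul, parity_split F (Finset.Icc (0:ℤ) (2*(g:ℤ))) hFsupp j]
    have : ∑' u : ℤ, F u = if s = 0 then 2 else 0 := by
      rw [← horth s]
      refine tsum_congr fun u => ?_
      rw [hFdef]
      simp only
      rw [show u + (k - j) = u + 2*s by omega]
    rw [this]
    by_cases hkj : k = j
    · simp [hkj, show s = 0 by omega]
    · simp [hkj, show ¬ (s = 0) by omega]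
  · -- odd case
    have hm1 : (-1:ℂ)^(k+j) = -1 := by
      rw [show k + j = 2*(s + j) + 1 by omega, m1_add, m1_two_mul, one_mul, zpow_one]
    have hBshift : ∑' l : ℤ, F (2*(g:ℤ) - 1 - k + 2*l) = ∑' l : ℤ, F (j + 2*l) := by
      rw [← Equiv.tsum_eq (Equiv.addLeft ((g:ℤ) - 1 - s - j)) (fun l : ℤ => F (j + 2*l))]
      refine tsum_congr fun l => ?_
      simp only [Equiv.coe_addLeft]
      rw [show j + 2*((g:ℤ) - 1 - s - j + l) = 2*(g:ℤ) - 1 - k + 2*l by omega]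
    rw [hBshift, hm1]
    have hkj : ¬ (k = j) := by omega
    simp [hkj]

end Kernels

end Stmt2Aux

set_option maxHeartbeats 1000000 in
/-- The low-pass filter operator `S₀` and the high-pass
operator `S₁` built from `bₖ = (−1)ᵏ a̅_{2g−1−k}` satisfy the Cuntz relations
`Sⱼ*Sₖ = δ_{j,k}·Id` and `S₀S₀* + S₁S₁* = Id` on `ℓ²(ℤ)`. -/
theorem stmt2 (g : ℕ) (hg : 1 ≤ g) (a b : ℤ → ℂ)
    (hsupp : ∀ j : ℤ, (j < 0 ∨ (2 * g : ℤ) ≤ j) → a j = 0)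
    (horth : ∀ l : ℤ, ∑' k : ℤ, a (k + 2 * l) * conj (a k)
      = if l = 0 then 2 else 0)
    (hb : ∀ k : ℤ, b k = (-1) ^ k * conj (a (2 * g - 1 - k)))
    (S0 S1 : lp (fun _ : ℤ => ℂ) 2 →L[ℂ] lp (fun _ : ℤ => ℂ) 2)
    (hS0 : ∀ (ξ : lp (fun _ : ℤ => ℂ) 2) (k : ℤ),
      (S0 ξ : ∀ _ : ℤ, ℂ) k = ((Real.sqrt 2 : ℂ))⁻¹ * ∑' l : ℤ, a (k - 2 * l) * ξ l)
    (hS1 : ∀ (ξ : lp (fun _ : ℤ => ℂ) 2) (k : ℤ),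
      (S1 ξ : ∀ _ : ℤ, ℂ) k = ((Real.sqrt 2 : ℂ))⁻¹ * ∑' l : ℤ, b (k - 2 * l) * ξ l) :
    ContinuousLinearMap.adjoint S0 ∘L S0 = 1 ∧
    ContinuousLinearMap.adjoint S1 ∘L S1 = 1 ∧
    ContinuousLinearMap.adjoint S0 ∘L S1 = 0 ∧
    ContinuousLinearMap.adjoint S1 ∘L S0 = 0 ∧
    S0 ∘L ContinuousLinearMap.adjoint S0 + S1 ∘L ContinuousLinearMap.adjoint S1 = 1 := by
  have hS0' : ∀ (ξ : lp (fun _ : ℤ => ℂ) 2) (k : ℤ),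
      (S0 ξ : ∀ _ : ℤ, ℂ) k = Stmt2Aux.cc * ∑' l : ℤ, a (k - 2 * l) * ξ l :=
    fun ξ k => by rw [hS0 ξ k]; rfl
  have hS1' : ∀ (ξ : lp (fun _ : ℤ => ℂ) 2) (k : ℤ),
      (S1 ξ : ∀ _ : ℤ, ℂ) k = Stmt2Aux.cc * ∑' l : ℤ, b (k - 2 * l) * ξ l :=
    fun ξ k => by rw [hS1 ξ k]; rfl
  have hsa : Stmt2Aux.Supp g a := hsupp
  have hsb : Stmt2Aux.Supp g b := by
    intro j hj
    rw [hb j, hsupp (2*(g:ℤ) - 1 - j) (by omega), map_zero, mul_zero]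
  exact ⟨Stmt2Aux.relation_delta a a hsa hsa S0 S0 hS0' hS0' (Stmt2Aux.Kaa horth),
    Stmt2Aux.relation_delta b b hsb hsb S1 S1 hS1' hS1' (Stmt2Aux.Kbb horth hb),
    Stmt2Aux.relation_zero a b hsa hsb S0 S1 hS0' hS1' (Stmt2Aux.Kab hb),
    Stmt2Aux.relation_zero b a hsb hsa S1 S0 hS1' hS0' (Stmt2Aux.Kba hb),
    Stmt2Aux.completeness a b hsa hsb S0 S1 hS0' hS1' (Stmt2Aux.K5 hsupp horth hb)⟩
end
end

section
/- Let N ≥ 2, g ≥ 1, and let a_0, …, a_{Ng−1} be complex numbers (a_j := 0 outside {0,…,Ng−1}) satisfying Σ_{k∈ℤ} a_{k+Nl} · conj(a_k) = N·δ_{0,l} for all l ∈ ℤ. Then the operator S_0 : ℓ²(ℤ) → ℓ²(ℤ) defined by (S_0 ξ)_k = (1/√N) Σ_{l∈ℤ} a_{k−Nl} ξ_l is a well-defined bounded linear isometry. -/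
/-!
The columns `w_l = N^{-1/2} a(· - N l)` of the matrix of `S₀` form an orthonormal family in
`ℓ²(ℤ)`: after translating the summation index, `⟪w_l, w_m⟫` is `N⁻¹` times the orthogonality sum
for the shift `l - m`. `S₀` is the synthesis map `ξ ↦ ∑ ξ_l w_l` of this family, and the synthesis
map of any orthonormal family is an isometry on `ℓ²`.
-/

open Real
open scoped ComplexConjugate InnerProductSpace

theorem Orthonormal.linearIsometry_apply_apply {𝕜 ι κ : Type*} [RCLike 𝕜]
    {v : ι → lp (fun _ : κ => 𝕜) 2} (hv : Orthonormal 𝕜 v) (ξ : lp (fun _ : ι => 𝕜) 2)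
    (k : κ) : (hv.orthogonalFamily.linearIsometry ξ : κ → 𝕜) k = ∑' l, ξ l * v l k :=
  ((hv.orthogonalFamily.hasSum_linearIsometry ξ).mapL (lp.evalCLM 𝕜 _ 2 k)).tsum_eq.symm

theorem Memℓp.comp_sub {E : Type*} [NormedAddCommGroup E] {a : ℤ → E} (ha : Memℓp a 2) (n : ℤ) :
    Memℓp (fun k => a (k - n)) 2 := by
  rw [memℓp_gen_iff (by simp)] at ha ⊢
  exact (Equiv.subRight n).summable_iff.mpr ha

namespace lp

def translate (a : lp (fun _ : ℤ => ℂ) 2) (n : ℤ) : lp (fun _ : ℤ => ℂ) 2 :=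
  ⟨fun k => a (k - n), (lp.memℓp a).comp_sub n⟩

@[simp]
theorem translate_apply (a : lp (fun _ : ℤ => ℂ) 2) (n k : ℤ) : translate a n k = a (k - n) :=
  rfl

theorem inner_translate_translate (a : lp (fun _ : ℤ => ℂ) 2) (m n : ℤ) :
    ⟪translate a m, translate a n⟫_ℂ = ∑' k, a (k + (m - n)) * conj (a k) := by
  rw [lp.inner_eq_tsum, ← (Equiv.addRight m).tsum_eq]
  congr 1 with k
  simp only [translate_apply, Equiv.coe_addRight, add_sub_cancel_right, add_sub_assoc,
    RCLike.inner_apply]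

theorem orthonormal_smul_translate (a : lp (fun _ : ℤ => ℂ) 2) {N : ℕ} (hN : 0 < N)
    (horth : ∀ l : ℤ, ∑' k : ℤ, a (k + N * l) * conj (a k) = if l = 0 then (N : ℂ) else 0) :
    Orthonormal ℂ (fun l : ℤ => ((√N : ℂ))⁻¹ • translate a (N * l)) := by
  rw [orthonormal_iff_ite]
  intro l m
  rw [inner_smul_left, inner_smul_right, inner_translate_translate, ← mul_sub, horth]
  simp only [sub_eq_zero]
  split_ifs
  · have hsq : ((√N : ℂ)) ^ 2 = N := by exact_mod_cast Real.sq_sqrt (Nat.cast_nonneg N)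
    have hne : ((√N : ℂ)) ≠ 0 := by exact_mod_cast (Real.sqrt_pos.mpr (by exact_mod_cast hN)).ne'
    rw [map_inv₀, Complex.conj_ofReal, ← hsq]
    field_simp
  · simp

end lp

theorem stmt3_general (N g : ℕ) (hN : 2 ≤ N) (a : ℤ → ℂ)
    (hsupp : ∀ j : ℤ, (j < 0 ∨ (N * g : ℤ) ≤ j) → a j = 0)
    (horth : ∀ l : ℤ, ∑' k : ℤ, a (k + N * l) * conj (a k)
      = if l = 0 then (N : ℂ) else 0) :
    ∃ S : lp (fun _ : ℤ => ℂ) 2 →ₗᵢ[ℂ] lp (fun _ : ℤ => ℂ) 2,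
      ∀ (ξ : lp (fun _ : ℤ => ℂ) 2) (k : ℤ),
        (S ξ : ∀ _ : ℤ, ℂ) k
          = ((Real.sqrt N : ℂ))⁻¹ * ∑' l : ℤ, a (k - N * l) * ξ l := by
  have hfin : Memℓp a 0 := memℓp_zero_iff.mpr <| (Set.finite_Ico 0 (N * g : ℤ)).subset
    fun j hj => by by_contra h; exact hj (hsupp j (by simp only [Set.mem_Ico] at h; omega))
  let A : lp (fun _ : ℤ => ℂ) 2 := ⟨a, hfin.of_exponent_ge (by simp)⟩
  have hv := lp.orthonormal_smul_translate A (by omega) horth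
  refine ⟨hv.orthogonalFamily.linearIsometry, fun ξ k => ?_⟩
  rw [hv.linearIsometry_apply_apply, ← tsum_mul_left]
  congr 1 with l
  simp only [lp.coeFn_smul, Pi.smul_apply, lp.translate_apply, smul_eq_mul]
  ring

/-- For scale `N ≥ 2`, if `a₀,…,a_{Ng−1}` satisfy
`∑ₖ a_{k+Nl} a̅ₖ = N δ_{0,l}`, then `(S₀ξ)ₖ = N^{-1/2} ∑ₗ a_{k−Nl} ξₗ` defines a
bounded linear isometry of `ℓ²(ℤ)`. -/
theorem stmt3 (N g : ℕ) (hN : 2 ≤ N) (hg : 1 ≤ g) (a : ℤ → ℂ)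
    (hsupp : ∀ j : ℤ, (j < 0 ∨ (N * g : ℤ) ≤ j) → a j = 0)
    (horth : ∀ l : ℤ, ∑' k : ℤ, a (k + N * l) * conj (a k)
      = if l = 0 then (N : ℂ) else 0) :
    ∃ S : lp (fun _ : ℤ => ℂ) 2 →ₗᵢ[ℂ] lp (fun _ : ℤ => ℂ) 2,
      ∀ (ξ : lp (fun _ : ℤ => ℂ) 2) (k : ℤ),
        (S ξ : ∀ _ : ℤ, ℂ) k
          = ((Real.sqrt N : ℂ))⁻¹ * ∑' l : ℤ, a (k - N * l) * ξ l :=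
  stmt3_general N g hN a hsupp horth
end

section
/- Let N ≥ 2, g ≥ 1, let a_0, …, a_{Ng−1} be complex numbers (a_j := 0 outside {0,…,Ng−1}), and define the trigonometric polynomial m_0(z) = (1/√N) Σ_{k=0}^{Ng−1} a_k z^k for z on the unit circle 𝕋. Then the following are equivalent: (i) Σ_{k∈ℤ} a_{k+Nl} · conj(a_k) = N·δ_{0,l} for all l ∈ ℤ; (ii) Σ_{k=0}^{N−1} |m_0(z·e^{2πik/N})|² = N for all z ∈ 𝕋. -/
open Complex Real
open scoped ComplexConjugate

/-!
On `𝕋` we have `z̄ = z⁻¹`, so `|∑ aⱼ zʲ|² = ∑_{j,j'} aⱼ ā_{j'} z^{j-j'}`. Summing over the points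
`z e^{2πik/N}` multiplies the term of index `(j, j')` by `∑ₖ e^{2πik(j-j')/N}`, which is `N` if
`N ∣ j - j'` and `0` otherwise. Hence `∑ₖ |m₀(z e^{2πik/N})|² = ∑ₗ cₗ z^{Nl}` with
`cₗ = ∑ₖ a_{k+Nl} āₖ`, which gives (i) ⇒ (ii). Conversely, a Laurent polynomial that is constant
on the infinite set `𝕋` has that constant as its only coefficient, since after multiplication by
a power of `z` it becomes a polynomial with infinitely many roots.
-/

open Finset

theorem IsPrimitiveRoot.sum_range_pow_zpow {K : Type*} [Field K] {ζ : K} {n : ℕ}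
    (hζ : IsPrimitiveRoot ζ n) (d : ℤ) :
    ∑ k ∈ range n, (ζ ^ k) ^ d = if (n : ℤ) ∣ d then (n : K) else 0 := by
  have hcomm : ∀ k : ℕ, (ζ ^ k) ^ d = (ζ ^ d) ^ k := fun k => by
    rw [← zpow_natCast, ← zpow_natCast, ← zpow_mul, ← zpow_mul, mul_comm]
  simp_rw [hcomm]
  split_ifs with hd
  · simp [(hζ.zpow_eq_one_iff_dvd d).mpr hd]
  · have hne : ζ ^ d ≠ 1 := fun h => hd ((hζ.zpow_eq_one_iff_dvd d).mp h)
    have hpow : (ζ ^ d) ^ n = 1 := by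
      rw [← zpow_natCast, ← zpow_mul, mul_comm, zpow_mul, zpow_natCast, hζ.pow_eq_one, one_zpow]
    rw [geom_sum_eq hne, hpow, sub_self, zero_div]

theorem Complex.sq_norm_sum_mul_zpow (S : Finset ℤ) (a : ℤ → ℂ) {w : ℂ} (hw : ‖w‖ = 1) :
    (‖∑ j ∈ S, a j * w ^ j‖ : ℂ) ^ 2
      = ∑ j ∈ S, ∑ j' ∈ S, a j * conj (a j') * w ^ (j - j') := by
  have hw0 : w ≠ 0 := by rintro rfl; simp at hw
  rw [← Complex.mul_conj', map_sum, sum_mul_sum]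
  refine sum_congr rfl fun j _ => sum_congr rfl fun j' _ => ?_
  rw [map_mul, map_zpow₀, ← Complex.inv_eq_conj hw, inv_zpow', zpow_sub₀ hw0, zpow_neg]
  ring

theorem IsPrimitiveRoot.sum_sq_norm_sum_mul_zpow {ζ : ℂ} {N : ℕ} (hζ : IsPrimitiveRoot ζ N)
    (hN : N ≠ 0) (S : Finset ℤ) (a : ℤ → ℂ) {z : ℂ} (hz : ‖z‖ = 1) :
    ∑ k ∈ range N, (‖∑ j ∈ S, a j * (z * ζ ^ k) ^ j‖ : ℂ) ^ 2
      = N * ∑ j ∈ S, ∑ j' ∈ S,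
          (if (N : ℤ) ∣ j - j' then a j * conj (a j') * z ^ (j - j') else 0) := by
  have hnorm : ∀ k : ℕ, ‖z * ζ ^ k‖ = 1 := fun k => by
    rw [norm_mul, norm_pow, hζ.norm'_eq_one hN, hz, one_pow, one_mul]
  simp_rw [Complex.sq_norm_sum_mul_zpow S a (hnorm _), mul_zpow, mul_sum]
  rw [sum_comm]
  refine sum_congr rfl fun j _ => ?_
  rw [sum_comm]
  refine sum_congr rfl fun j' _ => ?_
  rw [← mul_sum, ← mul_sum, hζ.sum_range_pow_zpow]
  split_ifs <;> ring

section Regrouping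

variable {n : ℤ} {S L : Finset ℤ}

theorem sum_ite_eq_add_mul_eq_ite_dvd {M : Type*} [AddCommMonoid M] (hn : n ≠ 0)
    (hL : ∀ l ∉ L, ∀ k ∈ S, k + n * l ∉ S) {j j' : ℤ} (hj : j ∈ S) (hj' : j' ∈ S) (x : M) :
    ∑ l ∈ L, (if j = j' + n * l then x else 0) = if n ∣ j - j' then x else 0 := by
  split_ifs with hdvd
  · obtain ⟨l₀, hl₀⟩ := hdvd
    have hj_eq : j = j' + n * l₀ := by linarith
    have hl₀L : l₀ ∈ L := by
      by_contra h
      exact hL l₀ h j' hj' (hj_eq ▸ hj)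
    rw [sum_eq_single_of_mem l₀ hl₀L fun l _ hl => if_neg ?_, if_pos hj_eq]
    intro h
    exact hl (mul_left_cancel₀ hn (by linarith))
  · exact sum_eq_zero fun l _ => if_neg fun h => hdvd ⟨l, by linarith⟩

theorem sum_sum_ite_dvd_sub_eq_sum_autocorr (hn : n ≠ 0) {a : ℤ → ℂ} (ha : ∀ j ∉ S, a j = 0)
    (hL : ∀ l ∉ L, ∀ k ∈ S, k + n * l ∉ S) (z : ℂ) :
    ∑ j ∈ S, ∑ j' ∈ S, (if n ∣ j - j' then a j * conj (a j') * z ^ (j - j') else 0)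
      = ∑ l ∈ L, (∑ k ∈ S, a (k + n * l) * conj (a k)) * z ^ (n * l) := by
  symm
  calc ∑ l ∈ L, (∑ k ∈ S, a (k + n * l) * conj (a k)) * z ^ (n * l)
      = ∑ l ∈ L, ∑ j' ∈ S, ∑ j ∈ S,
          (if j = j' + n * l then a j * conj (a j') * z ^ (j - j') else 0) := by
        refine sum_congr rfl fun l _ => ?_
        rw [sum_mul]
        refine sum_congr rfl fun j' _ => ?_
        rw [sum_ite_eq']
        split_ifs with h
        · rw [add_sub_cancel_left]
        · rw [ha _ h, zero_mul, zero_mul]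
    _ = ∑ j ∈ S, ∑ j' ∈ S, ∑ l ∈ L,
          (if j = j' + n * l then a j * conj (a j') * z ^ (j - j') else 0) := by
        rw [sum_comm, sum_congr rfl fun j' _ => sum_comm]
        exact sum_comm
    _ = _ := sum_congr rfl fun j hj => sum_congr rfl fun j' hj' =>
        sum_ite_eq_add_mul_eq_ite_dvd hn hL hj hj' _

end Regrouping

theorem eq_zero_of_forall_sum_mul_zpow_eq_zero {T : Set ℂ} (hT : T.Infinite) {s : Finset ℤ}
    {c : ℤ → ℂ} (h : ∀ z ∈ T, ∑ l ∈ s, c l * z ^ l = 0) : ∀ l ∈ s, c l = 0 := by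
  obtain ⟨K, hK⟩ : ∃ K : ℕ, ∀ l ∈ s, 0 ≤ l + K :=
    ⟨s.sup Int.natAbs, fun l hl => by
      have := le_sup (f := Int.natAbs) hl
      omega⟩
  set e : ℤ → ℕ := fun l => (l + K).toNat
  have he : Set.InjOn e s := fun l hl l' hl' h => by
    have := hK l hl; have := hK l' hl'; simp only [e] at h; omega
  set P : Polynomial ℂ := ∑ l ∈ s, Polynomial.C (c l) * Polynomial.X ^ e l
  have hP : P = 0 := by
    refine Polynomial.eq_zero_of_infinite_isRoot P (hT.sdiff (Set.finite_singleton 0) |>.mono ?_)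
    rintro z ⟨hzT, hz0 : z ≠ 0⟩
    have hpow : ∀ l ∈ s, z ^ e l = z ^ l * z ^ K := fun l hl => by
      rw [← zpow_natCast, Int.toNat_of_nonneg (hK l hl), zpow_add₀ hz0, zpow_natCast]
    show P.IsRoot z
    simp only [Polynomial.IsRoot, P, Polynomial.eval_finsetSum, Polynomial.eval_mul,
      Polynomial.eval_C, Polynomial.eval_pow, Polynomial.eval_X]
    rw [← zero_mul (z ^ K), ← h z hzT, sum_mul]
    exact sum_congr rfl fun l hl => by rw [hpow l hl, mul_assoc]
  intro l hl
  have hcoeff := congrArg (Polynomial.coeff · (e l)) hP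
  simp only [P, Polynomial.finsetSum_coeff, Polynomial.coeff_C_mul_X_pow,
    Polynomial.coeff_zero] at hcoeff
  rwa [sum_eq_single_of_mem l hl fun l' hl' hne => if_neg fun h => hne (he hl' hl h.symm),
    if_pos rfl] at hcoeff

theorem Complex.exists_pow_eq_of_norm_eq_one {n : ℕ} (hn : n ≠ 0) {w : ℂ} (hw : ‖w‖ = 1) :
    ∃ z : ℂ, ‖z‖ = 1 ∧ z ^ n = w := by
  obtain ⟨z, rfl⟩ := IsAlgClosed.exists_pow_nat_eq w (Nat.pos_of_ne_zero hn)
  exact ⟨z, (pow_eq_one_iff_of_nonneg (norm_nonneg z) hn).mp (by rwa [← norm_pow]), rfl⟩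

theorem eq_ite_of_forall_sum_mul_pow_zpow_eq {N : ℕ} (hN : N ≠ 0) {L : Finset ℤ} (h0 : 0 ∈ L)
    {c : ℤ → ℂ} {C : ℂ} (h : ∀ z : ℂ, ‖z‖ = 1 → ∑ l ∈ L, c l * (z ^ N) ^ l = C) :
    ∀ l ∈ L, c l = if l = 0 then C else 0 := by
  have hT : (Metric.sphere (0 : ℂ) 1).Infinite :=
    (isPreconnected_sphere (by simp) 0 1).infinite_of_nontrivial
      ⟨1, by simp, -1, by simp, by norm_num⟩
  have hsub := eq_zero_of_forall_sum_mul_zpow_eq_zero hT (s := L)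
    (c := fun l => c l - if l = 0 then C else 0) fun w hw => by
      obtain ⟨z, hz, rfl⟩ :=
        Complex.exists_pow_eq_of_norm_eq_one hN (mem_sphere_zero_iff_norm.mp hw)
      simp_rw [sub_mul, sum_sub_distrib, h z hz, ite_mul, zero_mul, sum_ite_eq', if_pos h0,
        zpow_zero, mul_one, sub_self]
  exact fun l hl => sub_eq_zero.mp (hsub l hl)

theorem mem_Ioo_of_mem_Ico_of_add_mul_mem_Ico {N g : ℕ} {k l : ℤ}
    (hk : k ∈ Ico (0 : ℤ) (N * g)) (hkl : k + N * l ∈ Ico (0 : ℤ) (N * g)) :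
    l ∈ Ioo (-(g : ℤ)) g := by
  rw [mem_Ico] at hk hkl
  have hN : (0 : ℤ) ≤ N := N.cast_nonneg
  rw [mem_Ioo]
  constructor <;> by_contra! h <;> linarith [mul_le_mul_of_nonneg_left h hN]

theorem sum_range_mul_pow_eq_sum_Ico_mul_zpow {K : Type*} [DivisionRing K] (M : ℕ)
    (a : ℤ → K) (w : K) :
    ∑ k ∈ range M, a k * w ^ k = ∑ j ∈ Ico (0 : ℤ) M, a j * w ^ j := by
  rw [Int.Ico_eq_finset_map, sum_map, sub_zero, Int.toNat_natCast]
  simp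

theorem Complex.sq_norm_inv_sqrt_mul {r : ℝ} (hr : 0 ≤ r) (x : ℂ) :
    (‖(√r : ℂ)⁻¹ * x‖ : ℂ) ^ 2 = (r : ℂ)⁻¹ * (‖x‖ : ℂ) ^ 2 := by
  rw [norm_mul, norm_inv, Complex.norm_real, Real.norm_of_nonneg (Real.sqrt_nonneg _)]
  push_cast
  rw [mul_pow, inv_pow, ← ofReal_pow, Real.sq_sqrt hr]

theorem sum_sq_norm_inv_sqrt_mul_eq_sum_autocorr {N : ℕ} (hN : N ≠ 0) {S L : Finset ℤ}
    {a : ℤ → ℂ} (ha : ∀ j ∉ S, a j = 0) (hL : ∀ l ∉ L, ∀ k ∈ S, k + N * l ∉ S) {z : ℂ}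
    (hz : ‖z‖ = 1) :
    ((∑ k ∈ range N, ‖(√N : ℂ)⁻¹ * ∑ j ∈ S, a j * (z * exp (2 * π * I * k / N)) ^ j‖ ^ 2 : ℝ) : ℂ)
      = ∑ l ∈ L, (∑ k ∈ S, a (k + N * l) * conj (a k)) * (z ^ N) ^ l := by
  have hexp : ∀ k : ℕ, exp (2 * π * I * k / N) = exp (2 * π * I / N) ^ k := fun k => by
    rw [← Complex.exp_nat_mul]; ring_nf
  push_cast
  simp_rw [Complex.sq_norm_inv_sqrt_mul N.cast_nonneg, ofReal_natCast, hexp, ← mul_sum,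
    (isPrimitiveRoot_exp N hN).sum_sq_norm_sum_mul_zpow hN S a hz,
    sum_sum_ite_dvd_sub_eq_sum_autocorr (Int.natCast_ne_zero.mpr hN) ha hL, zpow_mul, zpow_natCast]
  exact inv_mul_cancel_left₀ (Nat.cast_ne_zero.mpr hN : (N : ℂ) ≠ 0) _

/-- For `m₀(z) = N^{-1/2} ∑_{k=0}^{Ng−1} aₖ zᵏ`, the
orthogonality relations `∑ₖ a_{k+Nl} a̅ₖ = N δ_{0,l}` hold if and only if the
QMF condition `∑_{k=0}^{N−1} |m₀(z e^{2πik/N})|² = N` holds for all `z ∈ 𝕋`. -/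
theorem stmt4 (N g : ℕ) (hN : 2 ≤ N) (hg : 1 ≤ g) (a : ℤ → ℂ)
    (hsupp : ∀ j : ℤ, (j < 0 ∨ (N * g : ℤ) ≤ j) → a j = 0)
    (m0 : ℂ → ℂ)
    (hm0 : ∀ z : ℂ, m0 z
      = ((Real.sqrt N : ℂ))⁻¹ * ∑ k ∈ Finset.range (N * g), a (k : ℤ) * z ^ k) :
    (∀ l : ℤ, ∑' k : ℤ, a (k + N * l) * conj (a k)
        = if l = 0 then (N : ℂ) else 0) ↔
    (∀ z : ℂ, ‖z‖ = 1 →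
      ∑ k ∈ Finset.range N,
        ‖m0 (z * Complex.exp (2 * π * Complex.I * k / N))‖ ^ 2 = (N : ℝ)) := by
  have hN0 : N ≠ 0 := by omega
  set S := Ico (0 : ℤ) (N * g)
  set L := Ioo (-(g : ℤ)) g
  have ha : ∀ j ∉ S, a j = 0 := fun j hj => hsupp j (by rw [mem_Ico] at hj; omega)
  have hL : ∀ l ∉ L, ∀ k ∈ S, k + N * l ∉ S := fun l hl k hk hkl =>
    hl (mem_Ioo_of_mem_Ico_of_add_mul_mem_Ico hk hkl)
  have h0L : (0 : ℤ) ∈ L := by rw [mem_Ioo]; omega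
  have key : ∀ z : ℂ, ‖z‖ = 1 →
      ((∑ k ∈ range N, ‖m0 (z * exp (2 * π * I * k / N))‖ ^ 2 : ℝ) : ℂ)
        = ∑ l ∈ L, (∑ k ∈ S, a (k + N * l) * conj (a k)) * (z ^ N) ^ l := by
    intro z hz
    simp_rw [hm0, sum_range_mul_pow_eq_sum_Ico_mul_zpow, Nat.cast_mul]
    exact sum_sq_norm_inv_sqrt_mul_eq_sum_autocorr hN0 ha hL hz
  have hc : ∀ l : ℤ, ∑' k, a (k + N * l) * conj (a k) = ∑ k ∈ S, a (k + N * l) * conj (a k) :=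
    fun l => tsum_eq_sum fun k hk => by rw [ha k hk, map_zero, mul_zero]
  simp_rw [hc]
  constructor
  · intro h z hz
    have hz' := key z hz
    rw [sum_eq_single_of_mem 0 h0L fun l _ hl => by rw [h l, if_neg hl, zero_mul], h 0,
      if_pos rfl, zpow_zero, mul_one] at hz'
    exact_mod_cast hz'
  · intro h l
    by_cases hl : l ∈ L
    · exact eq_ite_of_forall_sum_mul_pow_zpow_eq hN0 h0L
        (fun z hz => by rw [← key z hz, h z hz, ofReal_natCast]) l hl
    · rw [if_neg (ne_of_mem_of_not_mem h0L hl).symm]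
      exact sum_eq_zero fun k hk => by rw [ha _ (hL l hl k hk), zero_mul]
end

section
/- Let N ≥ 2, and let m_0, m_1, …, m_{N−1} ∈ L^∞(𝕋) be such that for almost every z ∈ 𝕋 the N×N complex matrix (1/√N)·( m_j(e^{2πik/N} z) )_{j,k=0}^{N−1} is unitary. Define operators S_j on L²(𝕋) by (S_j f)(z) = m_j(z) f(z^N). Then the S_j are bounded operators satisfying the Cuntz relations: S_j* S_k = δ_{j,k} · Id for all j,k ∈ {0,…,N−1}, and Σ_{j=0}^{N−1} S_j S_j* = Id. -/
/-!
On the additive circle `ℝ/Tℤ` the map `z ↦ z^N` is `t ↦ N • t` and multiplication by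
`e^{2πik/N}` is translation by `rootShift T N k`; the fibres of `t ↦ N • t` are the orbits
of these translations. Averaging over them gives
`N ∫ φ(t) ψ(N t) = ∫ (∑ₗ φ(t + sₗ)) ψ(N t)`, and for `φ = mⱼ · conj mₖ` the orthonormal
rows of the unitary matrix make the inner sum `N δⱼₖ`: this is `Sⱼ* Sₖ = δⱼₖ`.
Conversely, for `g ∈ L²` the functions `wⱼ = N⁻¹ ∑ₗ conj mⱼ(· + sₗ) g(· + sₗ)` are
translation invariant, hence of the form `Fⱼ(N ·)`, and the orthonormal columns give
`g = ∑ⱼ mⱼ wⱼ = ∑ⱼ Sⱼ Fⱼ`. Every vector being in the sum of the ranges of the isometries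
`Sⱼ`, the projections `Sⱼ Sⱼ*` add up to the identity.
-/

open MeasureTheory Complex Real
open scoped ComplexConjugate

noncomputable section

instance : Fact (0 < 2 * π) := ⟨by positivity⟩

open scoped InnerProductSpace ENNReal Matrix

theorem Matrix.mul_star_eq_smul_one_of_inv_smul_mem_unitaryGroup {n 𝕜 : Type*} [Fintype n]
    [DecidableEq n] [Field 𝕜] [StarRing 𝕜] {A : Matrix n n 𝕜} {a : 𝕜} (ha : a ≠ 0)
    (hA : a⁻¹ • A ∈ Matrix.unitaryGroup n 𝕜) :
    A * star A = (a * star a) • 1 ∧ star A * A = (a * star a) • 1 := by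
  have hAU : A = a • (a⁻¹ • A) := by rw [smul_smul, mul_inv_cancel₀ ha, one_smul]
  constructor
  · rw [hAU, star_smul, Matrix.smul_mul, Matrix.mul_smul, Matrix.mem_unitaryGroup_iff.1 hA,
      smul_smul]
  · rw [hAU, star_smul, Matrix.smul_mul, Matrix.mul_smul, Matrix.mem_unitaryGroup_iff'.1 hA,
      smul_smul, mul_comm]

theorem Matrix.sum_mul_sum_star_mul_eq_vecMul {n R : Type*} [Fintype n] [CommSemiring R]
    [StarRing R] (A : Matrix n n R) (v : n → R) (i : n) :
    ∑ j, A j i * ∑ l, star (A j l) * v l = (v ᵥ* (star A * A)) i := by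
  simp only [Matrix.vecMul, dotProduct, Matrix.mul_apply, Matrix.star_apply, Finset.mul_sum]
  rw [Finset.sum_comm]
  exact Finset.sum_congr rfl fun l _ => Finset.sum_congr rfl fun j _ => by ring

theorem ContinuousLinearMap.sum_comp_adjoint_eq_one {𝕜 E F ι : Type*} [RCLike 𝕜]
    [NormedAddCommGroup E] [InnerProductSpace 𝕜 E] [CompleteSpace E]
    [NormedAddCommGroup F] [InnerProductSpace 𝕜 F] [CompleteSpace F] [Fintype ι] [DecidableEq ι]
    {S : ι → E →L[𝕜] F} (hS : ∀ j k, adjoint (S j) ∘L S k = if j = k then 1 else 0)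
    (hspan : ∀ g, ∃ f : ι → E, ∑ j, S j (f j) = g) :
    ∑ j, S j ∘L adjoint (S j) = 1 := by
  ext g
  obtain ⟨f, rfl⟩ := hspan g
  have hadj : ∀ k, adjoint (S k) (∑ j, S j (f j)) = f k := fun k => by
    simp_rw [map_sum, ← ContinuousLinearMap.comp_apply (adjoint (S k)), hS]
    rw [Finset.sum_eq_single k (fun j _ hj => by simp [Ne.symm hj]) (by simp)]
    simp
  rw [_root_.sum_apply]
  simp only [ContinuousLinearMap.comp_apply, hadj]
  rfl

namespace AddCircle

variable {T : ℝ} {N : ℕ}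

variable (T N) in
def rootShift (k : Fin N) : AddCircle T := ((T * k / N : ℝ) : AddCircle T)

theorem nsmul_coe_period_div [NeZero N] : N • ((T / N : ℝ) : AddCircle T) = 0 := by
  rw [← coe_nsmul, nsmul_eq_mul, mul_div_cancel₀ _ (NeZero.ne _), coe_period]

theorem rootShift_eq_nsmul (k : Fin N) :
    rootShift T N k = (k : ℕ) • ((T / N : ℝ) : AddCircle T) := by
  rw [rootShift, ← coe_nsmul, nsmul_eq_mul, mul_div_assoc', mul_comm]

theorem nsmul_rootShift [NeZero N] (k : Fin N) : N • rootShift T N k = 0 := by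
  rw [rootShift_eq_nsmul, smul_comm, nsmul_coe_period_div, nsmul_zero]

theorem rootShift_add [NeZero N] (k l : Fin N) :
    rootShift T N (k + l) = rootShift T N k + rootShift T N l := by
  rw [rootShift_eq_nsmul, rootShift_eq_nsmul, rootShift_eq_nsmul, Fin.val_add,
    ← nsmul_eq_mod_nsmul _ nsmul_coe_period_div, add_nsmul]

@[simp]
theorem rootShift_zero [NeZero N] : rootShift T N 0 = 0 := by
  simp [rootShift]

theorem sum_rootShift_add_rootShift [NeZero N] {M : Type*} [AddCommMonoid M]
    (F : AddCircle T → M) (t : AddCircle T) (k : Fin N) :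
    ∑ l, F (t + rootShift T N k + rootShift T N l) = ∑ l, F (t + rootShift T N l) := by
  simp_rw [add_assoc, ← rootShift_add]
  exact Equiv.sum_comp (Equiv.addLeft k) (fun l => F (t + rootShift T N l))

variable [Fact (0 < T)]

theorem measurePreserving_nsmul [NeZero N] :
    MeasurePreserving (fun t : AddCircle T => N • t) volume volume := by
  simpa only [natCast_zsmul] using
    Measure.measurePreserving_zsmul volume (Int.natCast_ne_zero.2 (NeZero.ne N))

theorem exists_eq_rootShift_of_nsmul_eq_zero [NeZero N] {u : AddCircle T} (hu : N • u = 0) :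
    ∃ l : Fin N, u = rootShift T N l := by
  have hT : 0 < T := Fact.out
  have hN : (0 : ℝ) < N := Nat.cast_pos.2 (Nat.pos_of_neZero N)
  obtain ⟨⟨x, hx0, hxT⟩, rfl⟩ : ∃ x : Set.Ico 0 (0 + T), ((x : ℝ) : AddCircle T) = u :=
    ⟨_, coe_equivIco⟩
  rw [zero_add] at hxT
  obtain ⟨n, hn⟩ := (coe_eq_zero_iff T).1 ((coe_nsmul T (n := N) (x := x)).trans hu)
  rw [zsmul_eq_mul, nsmul_eq_mul] at hn
  have hn0 : (0 : ℝ) ≤ n := by nlinarith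
  have hnN : (n : ℝ) < N := by nlinarith
  lift n to ℕ using (by exact_mod_cast hn0)
  refine ⟨⟨n, by exact_mod_cast hnN⟩, ?_⟩
  rw [rootShift]
  congr 1
  field_simp
  push_cast at hn
  linarith

variable (T N) in
def nsmulSection (s : AddCircle T) : AddCircle T := (((equivIco T 0 s : ℝ) / N : ℝ) : AddCircle T)

theorem measurable_nsmulSection : Measurable (nsmulSection T N) :=
  (AddCircle.continuous_mk' T).measurable.comp
    ((measurable_subtype_coe.comp (measurableEquivIco T 0).measurable).div_const _)

theorem nsmul_nsmulSection [NeZero N] (s : AddCircle T) : N • nsmulSection T N s = s := by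
  rw [nsmulSection, ← coe_nsmul, nsmul_eq_mul, mul_div_cancel₀ _ (NeZero.ne _), coe_equivIco]

theorem exists_nsmulSection_nsmul_eq_add_rootShift [NeZero N] (t : AddCircle T) :
    ∃ l : Fin N, nsmulSection T N (N • t) = t + rootShift T N l := by
  obtain ⟨l, hl⟩ := exists_eq_rootShift_of_nsmul_eq_zero
    (by rw [nsmul_sub, nsmul_nsmulSection, sub_self] : N • (nsmulSection T N (N • t) - t) = 0)
  exact ⟨l, by rw [← hl, add_sub_cancel]⟩

theorem comp_nsmulSection_nsmul_ae_eq [NeZero N] {E : Type*} {w : AddCircle T → E}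
    (hw : ∀ l : Fin N, (fun t => w (t + rootShift T N l)) =ᵐ[volume] w) :
    (fun t => w (nsmulSection T N (N • t))) =ᵐ[volume] w := by
  filter_upwards [ae_all_iff.2 hw] with t ht
  obtain ⟨l, hl⟩ := exists_nsmulSection_nsmul_eq_add_rootShift (N := N) t
  rw [hl]
  exact ht l

theorem exists_Lp_comp_nsmul_ae_eq [NeZero N] {E : Type*} [NormedAddCommGroup E] {p : ℝ≥0∞}
    {w : AddCircle T → E} (hw : MemLp w p volume)
    (hinv : ∀ l : Fin N, (fun t => w (t + rootShift T N l)) =ᵐ[volume] w) :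
    ∃ F : Lp E p (volume : Measure (AddCircle T)), (fun t => F (N • t)) =ᵐ[volume] w := by
  set w' := hw.1.mk w
  have hww' : w =ᵐ[volume] w' := hw.1.ae_eq_mk
  have hinv' (l : Fin N) : (fun t => w' (t + rootShift T N l)) =ᵐ[volume] w' :=
    ((measurePreserving_add_right volume _).quasiMeasurePreserving.ae_eq_comp hww'.symm).trans
      ((hinv l).trans hww')
  have hF : (fun t => w' (nsmulSection T N (N • t))) =ᵐ[volume] w :=
    (comp_nsmulSection_nsmul_ae_eq hinv').trans hww'.symm
  have hFm : AEStronglyMeasurable (w' ∘ nsmulSection T N) volume :=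
    (hw.1.stronglyMeasurable_mk.comp_measurable measurable_nsmulSection).aestronglyMeasurable
  have hFmem : MemLp (w' ∘ nsmulSection T N) p volume := by
    refine ⟨hFm, ?_⟩
    rw [← eLpNorm_comp_measurePreserving hFm (measurePreserving_nsmul (N := N))]
    exact (eLpNorm_congr_ae hF).trans_lt hw.2
  exact ⟨hFmem.toLp _, ((measurePreserving_nsmul (N := N)).quasiMeasurePreserving.ae_eq_comp
    hFmem.coeFn_toLp).trans hF⟩

section Integral

variable [NeZero N] {𝕜 : Type*} [RCLike 𝕜]

theorem integral_comp_nsmul {E : Type*} [NormedAddCommGroup E] [NormedSpace ℝ E]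
    {ψ : AddCircle T → E} (hψ : AEStronglyMeasurable ψ volume) :
    ∫ t, ψ (N • t) = ∫ s, ψ s := by
  have h := measurePreserving_nsmul (T := T) (N := N)
  rw [← integral_map h.measurable.aemeasurable (by rwa [h.map_eq]), h.map_eq]

theorem integral_rootShift_add_mul_comp_nsmul (φ ψ : AddCircle T → 𝕜) (l : Fin N) :
    ∫ t, φ (t + rootShift T N l) * ψ (N • t) = ∫ t, φ t * ψ (N • t) := by
  conv_rhs => rw [← integral_add_right_eq_self _ (rootShift T N l)]
  simp only [nsmul_add, nsmul_rootShift, add_zero]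

theorem integral_sum_rootShift_mul_comp_nsmul {φ ψ : AddCircle T → 𝕜} (hφ : MemLp φ ∞ volume)
    (hψ : Integrable ψ volume) :
    ∫ t, (∑ l : Fin N, φ (t + rootShift T N l)) * ψ (N • t) = N * ∫ t, φ t * ψ (N • t) := by
  have hψN : Integrable (fun t => ψ (N • t)) volume :=
    (measurePreserving_nsmul.integrable_comp hψ.1).2 hψ
  have hint (l : Fin N) : Integrable (fun t => φ (t + rootShift T N l) * ψ (N • t)) volume :=
    hψN.mul_of_top_right (hφ.comp_measurePreserving (measurePreserving_add_right volume _))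
  simp_rw [Finset.sum_mul]
  rw [integral_finsetSum _ fun l _ => hint l]
  simp [integral_rootShift_add_mul_comp_nsmul]

theorem integral_mul_comp_nsmul_of_sum_rootShift_ae_eq {φ ψ : AddCircle T → 𝕜}
    (hφ : MemLp φ ∞ volume) (hψ : Integrable ψ volume) {d : 𝕜}
    (hd : ∀ᵐ t, ∑ l : Fin N, φ (t + rootShift T N l) = N * d) :
    ∫ t, φ t * ψ (N • t) = d * ∫ s, ψ s := by
  have h := integral_sum_rootShift_mul_comp_nsmul (N := N) hφ hψ
  have hconst : ∫ t, (∑ l : Fin N, φ (t + rootShift T N l)) * ψ (N • t)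
      = ∫ t, (N * d) * ψ (N • t) :=
    integral_congr_ae (hd.mono fun t ht => congrArg (· * ψ (N • t)) ht)
  rw [hconst, integral_const_mul, integral_comp_nsmul (N := N) hψ.1, mul_assoc] at h
  exact (mul_left_cancel₀ (Nat.cast_ne_zero.2 (NeZero.ne N)) h).symm

end Integral

def modulationMatrix {R : Type*} (m : Fin N → AddCircle T → R) (t : AddCircle T) :
    Matrix (Fin N) (Fin N) R :=
  Matrix.of fun j k => m j (t + rootShift T N k)

section Cuntz

variable {m : Fin N → AddCircle T → ℂ}
  {S : Fin N → Lp ℂ 2 (volume : Measure (AddCircle T)) →L[ℂ]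
    Lp ℂ 2 (volume : Measure (AddCircle T))}

theorem inner_apply_eq_integral (hS : ∀ j f, ⇑(S j f) =ᵐ[volume] fun t => m j t * f (N • t))
    (j k : Fin N) (f g : Lp ℂ 2 (volume : Measure (AddCircle T))) :
    ⟪S k f, S j g⟫_ℂ = ∫ t, (m j t * conj (m k t)) * (conj (f (N • t)) * g (N • t)) := by
  rw [L2.inner_def]
  refine integral_congr_ae ?_
  filter_upwards [hS k f, hS j g] with t hf hg
  simp only [RCLike.inner_apply, hf, hg, map_mul]
  ring

theorem adjoint_comp_eq_ite [NeZero N] (hm : ∀ j, MemLp (m j) ∞ volume)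
    (hS : ∀ j f, ⇑(S j f) =ᵐ[volume] fun t => m j t * f (N • t))
    (hrow : ∀ᵐ t, modulationMatrix m t * star (modulationMatrix m t) = (N : ℂ) • 1)
    (j k : Fin N) :
    ContinuousLinearMap.adjoint (S j) ∘L S k = if j = k then 1 else 0 := by
  ext1 f
  refine ext_inner_right ℂ fun g => ?_
  have hd : ∀ᵐ t, ∑ l, m j (t + rootShift T N l) * conj (m k (t + rootShift T N l))
      = N * if j = k then 1 else 0 := by
    filter_upwards [hrow] with t ht
    simpa [modulationMatrix, Matrix.mul_apply, Matrix.one_apply] using congrFun (congrFun ht j) k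
  have hfg : Integrable (fun s => conj (f s) * g s) volume := by
    simpa [mul_comm] using L2.integrable_inner (𝕜 := ℂ) f g
  have hφ : MemLp (fun t => m j t * conj (m k t)) ∞ volume := (hm k).star.mul' (hm j)
  rw [ContinuousLinearMap.comp_apply, ContinuousLinearMap.adjoint_inner_left,
    inner_apply_eq_integral hS,
    integral_mul_comp_nsmul_of_sum_rootShift_ae_eq hφ hfg hd]
  split_ifs <;> simp [L2.inner_def, mul_comm]

theorem exists_sum_apply_eq [NeZero N] (hm : ∀ j, MemLp (m j) ∞ volume)
    (hS : ∀ j f, ⇑(S j f) =ᵐ[volume] fun t => m j t * f (N • t))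
    (hcol : ∀ᵐ t, star (modulationMatrix m t) * modulationMatrix m t = (N : ℂ) • 1)
    (g : Lp ℂ 2 (volume : Measure (AddCircle T))) :
    ∃ F : Fin N → Lp ℂ 2 (volume : Measure (AddCircle T)), ∑ j, S j (F j) = g := by
  -- `w j` is `Sⱼ* g` read on the `N`-fold cover, i.e. `(Sⱼ* g)(N • t) = w j t`.
  set w : Fin N → AddCircle T → ℂ := fun j t =>
    (N : ℂ)⁻¹ * ∑ l, conj (m j (t + rootShift T N l)) * g (t + rootShift T N l)
  have hw (j : Fin N) : MemLp (w j) 2 volume := by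
    have hprod : MemLp (fun t => conj (m j t) * g t) 2 volume := (Lp.memLp g).mul' (hm j).star
    exact (memLp_finsetSum _ fun l _ =>
      hprod.comp_measurePreserving (measurePreserving_add_right volume _)).const_mul _
  have hinv (j k : Fin N) : (fun t => w j (t + rootShift T N k)) =ᵐ[volume] w j :=
    .of_forall fun t => by
      simp only [w, sum_rootShift_add_rootShift (fun s => conj (m j s) * g s)]
  choose F hF using fun j => exists_Lp_comp_nsmul_ae_eq (hw j) (hinv j)
  refine ⟨F, Lp.ext ?_⟩
  filter_upwards [Lp.coeFn_finsetSum Finset.univ fun j => S j (F j),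
    ae_all_iff.2 fun j => hS j (F j), ae_all_iff.2 hF, hcol] with t hsum hSF hF ht
  have hrecon := Matrix.sum_mul_sum_star_mul_eq_vecMul (modulationMatrix m t)
    (fun l => g (t + rootShift T N l)) 0
  rw [ht] at hrecon
  simp only [modulationMatrix, Matrix.of_apply, rootShift_zero, add_zero, RCLike.star_def,
    Matrix.vecMul_smul, Matrix.vecMul_one, Pi.smul_apply, smul_eq_mul] at hrecon
  rw [hsum, Finset.sum_apply]
  simp only [hSF, hF, w]
  simp_rw [mul_left_comm _ (N : ℂ)⁻¹, ← Finset.mul_sum, hrecon]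
  exact inv_mul_cancel_left₀ (Nat.cast_ne_zero.2 (NeZero.ne N)) _

end Cuntz

end AddCircle

/-- If `m₀,…,m_{N−1} ∈ L^∞(𝕋)` (with `𝕋 = ℝ/2πℤ`) are such
that the matrix `N^{-1/2}(mⱼ(e^{2πik/N} z))_{j,k}` is a.e. unitary, then the
operators `(Sⱼf)(z) = mⱼ(z) f(z^N)` on `L²(𝕋)` satisfy the Cuntz relations
`Sⱼ*Sₖ = δ_{j,k}·Id` and `∑ⱼ SⱼSⱼ* = Id`. -/
theorem stmt5 (N : ℕ) (hN : 2 ≤ N)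
    (m : Fin N → AddCircle (2 * π) → ℂ)
    (hm : ∀ j, MemLp (m j) ⊤ (volume : Measure (AddCircle (2 * π))))
    (hunit : ∀ᵐ t : AddCircle (2 * π),
      (Matrix.of fun j k : Fin N =>
          ((Real.sqrt N : ℂ))⁻¹ * m j (t + ((2 * π * k / N : ℝ) : AddCircle (2 * π))))
        ∈ Matrix.unitaryGroup (Fin N) ℂ)
    (S : Fin N → (Lp ℂ 2 (volume : Measure (AddCircle (2 * π)))
      →L[ℂ] Lp ℂ 2 (volume : Measure (AddCircle (2 * π)))))
    (hS : ∀ j (f : Lp ℂ 2 (volume : Measure (AddCircle (2 * π)))),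
      ⇑(S j f) =ᵐ[volume] fun t => m j t * f (N • t)) :
    (∀ j k, ContinuousLinearMap.adjoint (S j) ∘L S k = if j = k then 1 else 0) ∧
    ∑ j, S j ∘L ContinuousLinearMap.adjoint (S j) = 1 := by
  have : NeZero N := ⟨by omega⟩
  have hsqrt : ((Real.sqrt N : ℂ)) * star ((Real.sqrt N : ℂ)) = N := by
    rw [Complex.star_def, Complex.conj_ofReal, ← Complex.ofReal_mul,
      Real.mul_self_sqrt (Nat.cast_nonneg N), Complex.ofReal_natCast]
  have hA : ∀ᵐ t, AddCircle.modulationMatrix m t * star (AddCircle.modulationMatrix m t)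
      = (N : ℂ) • 1 ∧ star (AddCircle.modulationMatrix m t) * AddCircle.modulationMatrix m t
      = (N : ℂ) • 1 := by
    filter_upwards [hunit] with t ht
    rw [← hsqrt]
    refine Matrix.mul_star_eq_smul_one_of_inv_smul_mem_unitaryGroup ?_ ht
    exact_mod_cast (Real.sqrt_pos.2 (Nat.cast_pos.2 (by omega))).ne'
  have hcuntz := AddCircle.adjoint_comp_eq_ite hm hS (hA.mono fun _ h => h.1)
  exact ⟨hcuntz, ContinuousLinearMap.sum_comp_adjoint_eq_one hcuntz
    (AddCircle.exists_sum_apply_eq hm hS (hA.mono fun _ h => h.2))⟩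
end
end

section
/- Let N ≥ 2 and let m_0, …, m_{N−1} : 𝕋 → ℂ be continuous functions. Define A_{j,k}(z) = (1/N) Σ_{w∈𝕋, w^N = z} w^{−k} m_j(w) for j,k ∈ {0,…,N−1} and z ∈ 𝕋. Then (a) the reconstruction formula m_j(z) = Σ_{k=0}^{N−1} A_{j,k}(z^N) z^k holds for all z ∈ 𝕋 and all j; and (b) the N×N matrix (1/√N)·( m_j(e^{2πik/N} z) )_{j,k=0}^{N−1} is unitary for all z ∈ 𝕋 if and only if the matrix A(z) = (A_{j,k}(z))_{j,k=0}^{N−1} is unitary for all z ∈ 𝕋. -/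
/-!
Write `ζ = e^{2πi/N}`, `M(z) = N^{-1/2} (mⱼ(ζˡ z))_{j,l}` and `F(z) = N^{-1/2} ((ζˡ z)^{-k})_{l,k}`.
The `N`-th roots of `zᴺ` are exactly the points `ζˡ z`, so `A(zᴺ) = M(z) F(z)`. For `|z| = 1`
the matrix `F(z)` is a discrete Fourier matrix times a unitary diagonal matrix, hence unitary,
and so `M(z) = A(zᴺ) F(z)*`. Reading off the column `l = 0` of this identity gives the
reconstruction formula, and since every point of the circle is an `N`-th power of a point of
the circle, `M` is unitary on `𝕋` exactly when `A` is.
-/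

open Complex Real Polynomial

noncomputable section

theorem Fin.sum_pow_of_pow_eq_one {K : Type*} [Field K] [DecidableEq K] {N : ℕ} {u : K}
    (hu : u ^ N = 1) : ∑ k : Fin N, u ^ (k : ℕ) = if u = 1 then (N : K) else 0 := by
  rw [Fin.sum_univ_eq_sum_range (u ^ ·)]
  split_ifs with h
  · simp [h]
  · rw [geom_sum_eq h, hu, sub_self, zero_div]

namespace IsPrimitiveRoot

variable {K : Type*} [Field K] [DecidableEq K] {N : ℕ} {ζ : K}

theorem sum_pow_div_pow (hζ : IsPrimitiveRoot ζ N) (l l' : Fin N) :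
    ∑ k : Fin N, (ζ ^ (l' : ℕ) / ζ ^ (l : ℕ)) ^ (k : ℕ) = if l = l' then (N : K) else 0 := by
  have hu : (ζ ^ (l' : ℕ) / ζ ^ (l : ℕ)) ^ N = 1 := by
    rw [div_pow, ← pow_mul, ← pow_mul, pow_mul', pow_mul' ζ, hζ.pow_eq_one, one_pow, one_pow,
      div_one]
  have hζ0 : ζ ≠ 0 := hζ.ne_zero (Fin.pos l).ne'
  rw [Fin.sum_pow_of_pow_eq_one hu]
  refine if_congr ?_ rfl rfl
  rw [div_eq_one_iff_eq (pow_ne_zero _ hζ0), eq_comm, Fin.ext_iff]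
  exact ⟨hζ.pow_inj l.isLt l'.isLt, congrArg (ζ ^ ·)⟩

theorem sum_toFinset_nthRoots_pow {M : Type*} [AddCommMonoid M] (hζ : IsPrimitiveRoot ζ N)
    {z : K} (hz : z ≠ 0) (f : K → M) :
    ∑ w ∈ (nthRoots N (z ^ N)).toFinset, f w = ∑ l : Fin N, f (ζ ^ (l : ℕ) * z) := by
  rw [← Multiset.toFinset_eq (hζ.nthRoots_nodup (pow_ne_zero N hz)), Finset.sum_mk,
    hζ.nthRoots_eq rfl, Multiset.map_map, Fin.sum_univ_eq_sum_range (fun l => f (ζ ^ l * z))]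
  rfl

end IsPrimitiveRoot

namespace Complex

theorem star_zpow_neg_of_norm_eq_one {w : ℂ} (hw : ‖w‖ = 1) (k : ℕ) :
    star (w ^ (-(k : ℤ))) = w ^ k := by
  rw [star_def, map_zpow₀, ← inv_eq_conj hw, inv_zpow', neg_neg, zpow_natCast]

theorem exists_pow_eq_of_norm_eq_one_s6 {N : ℕ} (hN : N ≠ 0) {z : ℂ} (hz : ‖z‖ = 1) :
    ∃ w : ℂ, ‖w‖ = 1 ∧ w ^ N = z := by
  obtain ⟨w, hw⟩ := IsAlgClosed.exists_pow_nat_eq z (Nat.pos_of_ne_zero hN)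
  refine ⟨w, ?_, hw⟩
  rwa [← pow_eq_one_iff_of_nonneg (norm_nonneg w) hN, ← norm_pow, hw]

theorem exp_two_pi_I_mul_natCast_div (k N : ℕ) :
    exp (2 * π * I * k / N) = exp (2 * π * I / N) ^ k := by
  rw [← exp_nat_mul]
  ring_nf

theorem inv_sqrt_natCast_mul_self (N : ℕ) :
    (Real.sqrt N : ℂ)⁻¹ * (Real.sqrt N : ℂ)⁻¹ = (N : ℂ)⁻¹ := by
  rw [← mul_inv, ← ofReal_mul, Real.mul_self_sqrt (Nat.cast_nonneg N), ofReal_natCast]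

end Complex

section Polyphase

variable {N : ℕ} {ζ : ℂ}

def twistedDFT (ζ z : ℂ) : Matrix (Fin N) (Fin N) ℂ :=
  Matrix.of fun l k => (Real.sqrt N : ℂ)⁻¹ * (ζ ^ (l : ℕ) * z) ^ (-(k : ℤ))

def modulationMatrix (ζ : ℂ) (m : Fin N → ℂ → ℂ) (z : ℂ) : Matrix (Fin N) (Fin N) ℂ :=
  Matrix.of fun j l => (Real.sqrt N : ℂ)⁻¹ * m j (ζ ^ (l : ℕ) * z)

open scoped Classical in
def polyphaseMatrix (m : Fin N → ℂ → ℂ) (z : ℂ) : Matrix (Fin N) (Fin N) ℂ :=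
  Matrix.of fun j k => (N : ℂ)⁻¹ * ∑ w ∈ (nthRoots N z).toFinset, w ^ (-(k : ℤ)) * m j w

theorem twistedDFT_mem_unitaryGroup [NeZero N] (hζ : IsPrimitiveRoot ζ N) {z : ℂ}
    (hz : ‖z‖ = 1) : twistedDFT ζ z ∈ Matrix.unitaryGroup (Fin N) ℂ := by
  have hζz (l : Fin N) : ‖ζ ^ (l : ℕ) * z‖ = 1 := by
    rw [norm_mul, norm_pow, hζ.norm'_eq_one (NeZero.ne N), hz, one_pow, one_mul]
  have hz0 : z ≠ 0 := norm_ne_zero_iff.mp (hz ▸ one_ne_zero)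
  have hentry (l l' k : Fin N) : twistedDFT ζ z l k * star (twistedDFT ζ z l' k) =
      (N : ℂ)⁻¹ * (ζ ^ (l' : ℕ) / ζ ^ (l : ℕ)) ^ (k : ℕ) := by
    simp only [twistedDFT, Matrix.of_apply, star_mul', star_inv₀,
      star_zpow_neg_of_norm_eq_one (hζz l'), star_def, conj_ofReal]
    rw [← inv_sqrt_natCast_mul_self, zpow_neg, zpow_natCast, div_pow, mul_pow, mul_pow]
    field_simp
  rw [Matrix.mem_unitaryGroup_iff]
  ext l l'
  simp only [Matrix.mul_apply, Matrix.star_apply, hentry, ← Finset.mul_sum, hζ.sum_pow_div_pow,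
    Matrix.one_apply]
  split_ifs <;> simp [NeZero.ne N]

theorem polyphaseMatrix_pow (hζ : IsPrimitiveRoot ζ N) (m : Fin N → ℂ → ℂ) {z : ℂ}
    (hz : z ≠ 0) : polyphaseMatrix m (z ^ N) = modulationMatrix ζ m z * twistedDFT ζ z := by
  ext j k
  simp only [polyphaseMatrix, modulationMatrix, twistedDFT, Matrix.of_apply, Matrix.mul_apply,
    hζ.sum_toFinset_nthRoots_pow hz, Finset.mul_sum, ← inv_sqrt_natCast_mul_self N]
  exact Finset.sum_congr rfl fun l _ => by ring

theorem modulationMatrix_eq_polyphaseMatrix_mul_star [NeZero N] (hζ : IsPrimitiveRoot ζ N)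
    (m : Fin N → ℂ → ℂ) {z : ℂ} (hz : ‖z‖ = 1) :
    modulationMatrix ζ m z = polyphaseMatrix m (z ^ N) * star (twistedDFT ζ z) := by
  rw [polyphaseMatrix_pow hζ m (norm_ne_zero_iff.mp (hz ▸ one_ne_zero)), Matrix.mul_assoc,
    Matrix.mem_unitaryGroup_iff.mp (twistedDFT_mem_unitaryGroup hζ hz), Matrix.mul_one]

theorem apply_eq_sum_polyphaseMatrix [NeZero N] (hζ : IsPrimitiveRoot ζ N)
    (m : Fin N → ℂ → ℂ) (j : Fin N) {z : ℂ} (hz : ‖z‖ = 1) :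
    m j z = ∑ k : Fin N, polyphaseMatrix m (z ^ N) j k * z ^ (k : ℕ) := by
  have h := congrFun (congrFun (modulationMatrix_eq_polyphaseMatrix_mul_star hζ m hz) j) 0
  simp only [modulationMatrix, twistedDFT, Matrix.of_apply, Matrix.mul_apply, Matrix.star_apply,
    Fin.val_zero, pow_zero, one_mul, star_mul', star_inv₀, star_zpow_neg_of_norm_eq_one hz,
    star_def, conj_ofReal, mul_left_comm _ (Real.sqrt N : ℂ)⁻¹, ← Finset.mul_sum] at h
  have hN : (Real.sqrt N : ℂ)⁻¹ ≠ 0 := by simp [NeZero.ne N]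
  exact mul_left_cancel₀ hN h

theorem forall_modulationMatrix_mem_unitaryGroup_iff [NeZero N] (hζ : IsPrimitiveRoot ζ N)
    (m : Fin N → ℂ → ℂ) :
    (∀ z : ℂ, ‖z‖ = 1 → modulationMatrix ζ m z ∈ Matrix.unitaryGroup (Fin N) ℂ) ↔
      ∀ z : ℂ, ‖z‖ = 1 → polyphaseMatrix m z ∈ Matrix.unitaryGroup (Fin N) ℂ := by
  constructor
  · intro hM z hz
    obtain ⟨w, hw, rfl⟩ := exists_pow_eq_of_norm_eq_one_s6 (NeZero.ne N) hz
    rw [polyphaseMatrix_pow hζ m (norm_ne_zero_iff.mp (hw ▸ one_ne_zero))]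
    exact mul_mem (hM w hw) (twistedDFT_mem_unitaryGroup hζ hw)
  · intro hP z hz
    rw [modulationMatrix_eq_polyphaseMatrix_mul_star hζ m hz]
    exact mul_mem (hP _ (by rw [norm_pow, hz, one_pow]))
      (Unitary.star_mem (twistedDFT_mem_unitaryGroup hζ hz))

end Polyphase

open scoped Classical in
theorem stmt6_general (N : ℕ) (hN : 2 ≤ N)
    (m : Fin N → ℂ → ℂ)
    (A : Fin N → Fin N → ℂ → ℂ)
    (hA : ∀ (j k : Fin N) (z : ℂ), ‖z‖ = 1 →
      A j k z = (N : ℂ)⁻¹ *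
        ∑ w ∈ (Polynomial.nthRoots N z).toFinset, w ^ (-(k : ℤ)) * m j w) :
    (∀ (j : Fin N) (z : ℂ), ‖z‖ = 1 →
      m j z = ∑ k : Fin N, A j k (z ^ N) * z ^ (k : ℕ)) ∧
    ((∀ z : ℂ, ‖z‖ = 1 →
        (Matrix.of fun j k : Fin N =>
            ((Real.sqrt N : ℂ))⁻¹ * m j (Complex.exp (2 * π * Complex.I * k / N) * z))
          ∈ Matrix.unitaryGroup (Fin N) ℂ) ↔
      (∀ z : ℂ, ‖z‖ = 1 →
        (Matrix.of fun j k : Fin N => A j k z) ∈ Matrix.unitaryGroup (Fin N) ℂ)) := by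
  have : NeZero N := ⟨by omega⟩
  have hζ := isPrimitiveRoot_exp N (NeZero.ne N)
  have hA_eq (z : ℂ) (hz : ‖z‖ = 1) : Matrix.of (fun j k => A j k z) = polyphaseMatrix m z :=
    Matrix.ext fun j k => hA j k z hz
  have hM_eq (z : ℂ) : Matrix.of (fun j k : Fin N =>
      (Real.sqrt N : ℂ)⁻¹ * m j (exp (2 * π * I * k / N) * z)) =
        modulationMatrix (exp (2 * π * I / N)) m z := by
    ext j k
    rw [modulationMatrix, Matrix.of_apply, Matrix.of_apply, ← exp_two_pi_I_mul_natCast_div]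
  refine ⟨fun j z hz => ?_, ?_⟩
  · rw [apply_eq_sum_polyphaseMatrix hζ m j hz, ← hA_eq _ (by rw [norm_pow, hz, one_pow])]
    rfl
  · simp only [hM_eq, forall_modulationMatrix_mem_unitaryGroup_iff hζ m]
    exact forall₂_congr fun z hz => by rw [hA_eq z hz]

open scoped Classical in
/-- For continuous `m₀,…,m_{N−1}` on the unit circle and
`A_{j,k}(z) = N⁻¹ ∑_{wᴺ=z} w⁻ᵏ mⱼ(w)`: (a) the reconstruction formula
`mⱼ(z) = ∑ₖ A_{j,k}(zᴺ) zᵏ` holds, and (b) the matrix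
`N^{-1/2}(mⱼ(e^{2πik/N}z))` is unitary for all `z ∈ 𝕋` iff `A(z)` is unitary
for all `z ∈ 𝕋`. -/
theorem stmt6 (N : ℕ) (hN : 2 ≤ N)
    (m : Fin N → ℂ → ℂ)
    (hm : ∀ j, ContinuousOn (m j) {z : ℂ | ‖z‖ = 1})
    (A : Fin N → Fin N → ℂ → ℂ)
    (hA : ∀ (j k : Fin N) (z : ℂ), ‖z‖ = 1 →
      A j k z = (N : ℂ)⁻¹ *
        ∑ w ∈ (Polynomial.nthRoots N z).toFinset, w ^ (-(k : ℤ)) * m j w) :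
    (∀ (j : Fin N) (z : ℂ), ‖z‖ = 1 →
      m j z = ∑ k : Fin N, A j k (z ^ N) * z ^ (k : ℕ)) ∧
    ((∀ z : ℂ, ‖z‖ = 1 →
        (Matrix.of fun j k : Fin N =>
            ((Real.sqrt N : ℂ))⁻¹ * m j (Complex.exp (2 * π * Complex.I * k / N) * z))
          ∈ Matrix.unitaryGroup (Fin N) ℂ) ↔
      (∀ z : ℂ, ‖z‖ = 1 →
        (Matrix.of fun j k : Fin N => A j k z) ∈ Matrix.unitaryGroup (Fin N) ℂ)) :=
  stmt6_general N hN m A hA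
end
end

section
/- Let S_0, S_1 be the operators on ℓ²(ℤ) given by (S_0ξ)_{2l} = (S_0ξ)_{2l+1} = (1/√2)ξ_l and (S_1ξ)_{2l} = (1/√2)ξ_l, (S_1ξ)_{2l+1} = −(1/√2)ξ_l for l ∈ ℤ (these are the Haar filter operators with coefficients a_0 = a_1 = 1, b_0 = 1, b_1 = −1). Then the closed subspace H_0 = { ξ ∈ ℓ²(ℤ) : ξ_k = 0 for all k < 0 } satisfies S_0H_0 ⊆ H_0, S_1H_0 ⊆ H_0, S_0*H_0 ⊆ H_0 and S_1*H_0 ⊆ H_0, and {0} ⊊ H_0 ⊊ ℓ²(ℤ); consequently the Haar representation of the Cuntz relations on ℓ²(ℤ) is reducible. -/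
/-!
Let `H₋` be the closed subspace of sequences vanishing on `ℕ`, so that `H₀ = H₋ᗮ`. Each Haar filter
operator `S` writes `(Sξ)ₙ` as a multiple of `ξ_{⌊n/2⌋}`, and `n ↦ ⌊n/2⌋` preserves the sign of `n`;
hence `S` preserves both `H₀` and `H₋`, and then `S*` preserves `H₋ᗮ = H₀`. The vectors `e₀ ∈ H₀`
and `e₋₁ ∉ H₀` show that `H₀` is neither `0` nor everything.
-/

namespace lp

variable {𝕜 ι : Type*} [RCLike 𝕜]

def vanishingOn (s : Set ι) : Submodule 𝕜 (lp (fun _ : ι => 𝕜) 2) where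
  carrier := {ξ | ∀ i ∈ s, ξ i = 0}
  add_mem' {ξ η} hξ hη i hi := by simp [hξ i hi, hη i hi]
  zero_mem' i _ := rfl
  smul_mem' c ξ hξ i hi := by simp [hξ i hi]

theorem inner_eq_zero_of_vanishingOn_compl {s : Set ι} {ξ η : lp (fun _ : ι => 𝕜) 2}
    (hξ : ξ ∈ vanishingOn s) (hη : η ∈ vanishingOn sᶜ) : inner 𝕜 ξ η = 0 := by
  rw [lp.inner_eq_tsum]
  refine (tsum_congr fun i => ?_).trans tsum_zero
  by_cases hi : i ∈ s
  · simp [hξ i hi]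
  · simp [hη i hi]

theorem single_mem_vanishingOn [DecidableEq ι] {s : Set ι} {i : ι} (hi : i ∉ s) (a : 𝕜) :
    lp.single 2 i a ∈ vanishingOn s := fun _ hj =>
  lp.single_apply_ne (E := fun _ : ι => 𝕜) 2 i a (ne_of_mem_of_not_mem hj hi)

theorem vanishingOn_ne_bot {s : Set ι} (hs : sᶜ.Nonempty) :
    (vanishingOn s : Submodule 𝕜 (lp (fun _ : ι => 𝕜) 2)) ≠ ⊥ := by
  classical
  obtain ⟨i, hi⟩ := hs
  refine (Submodule.ne_bot_iff _).2 ⟨lp.single 2 i 1, single_mem_vanishingOn hi 1, fun h => ?_⟩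
  simpa [lp.single_apply_self] using congrArg (fun ξ : lp (fun _ : ι => 𝕜) 2 => ξ i) h

theorem vanishingOn_ne_top {s : Set ι} (hs : s.Nonempty) :
    (vanishingOn s : Submodule 𝕜 (lp (fun _ : ι => 𝕜) 2)) ≠ ⊤ := by
  classical
  obtain ⟨i, hi⟩ := hs
  intro h
  have hsingle : lp.single 2 i (1 : 𝕜) ∈ vanishingOn s := h ▸ Submodule.mem_top
  simpa [lp.single_apply_self] using hsingle i hi

theorem vanishingOn_orthogonal (s : Set ι) :
    (vanishingOn s)ᗮ = (vanishingOn sᶜ : Submodule 𝕜 (lp (fun _ : ι => 𝕜) 2)) := by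
  classical
  ext η
  refine ⟨fun hη i hi => ?_, fun hη ξ hξ => inner_eq_zero_of_vanishingOn_compl hξ hη⟩
  simpa [lp.inner_single_left] using hη _ (single_mem_vanishingOn hi 1)

end lp

namespace ContinuousLinearMap

variable {𝕜 E : Type*} [RCLike 𝕜] [NormedAddCommGroup E] [InnerProductSpace 𝕜 E]
  [CompleteSpace E]

theorem adjoint_mem_orthogonal {T : E →L[𝕜] E} {K : Submodule 𝕜 E}
    (hT : ∀ x ∈ K, T x ∈ K) {y : E} (hy : y ∈ Kᗮ) : adjoint T y ∈ Kᗮ := by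
  intro x hx
  rw [adjoint_inner_right]
  exact hy (T x) (hT x hx)

end ContinuousLinearMap

theorem apply_mem_vanishingOn_of_dyadic {𝕜 : Type*} [RCLike 𝕜]
    {T : lp (fun _ : ℤ => 𝕜) 2 →L[𝕜] lp (fun _ : ℤ => 𝕜) 2}
    {a b : 𝕜} (hT : ∀ ξ l, T ξ (2 * l) = a * ξ l ∧ T ξ (2 * l + 1) = b * ξ l)
    {s : Set ℤ} (hs : ∀ n ∈ s, n / 2 ∈ s) {ξ : lp (fun _ : ℤ => 𝕜) 2}
    (hξ : ξ ∈ lp.vanishingOn s) : T ξ ∈ lp.vanishingOn s := by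
  intro n hn
  have hzero := hξ (n / 2) (hs n hn)
  rcases Int.emod_two_eq_zero_or_one n with h | h
  · rw [← Int.mul_ediv_add_emod n 2, h, add_zero, (hT ξ _).1, hzero, mul_zero]
  · rw [← Int.mul_ediv_add_emod n 2, h, (hT ξ _).2, hzero, mul_zero]

/-- For the Haar filter operators `S₀, S₁` on `ℓ²(ℤ)`
(coefficients `a₀ = a₁ = 1`, `b₀ = 1`, `b₁ = −1`), the closed subspace
`H₀ = {ξ : ξₖ = 0 for k < 0}` is invariant under `S₀, S₁, S₀*, S₁*` and is
proper and nonzero; hence the Haar representation of the Cuntz relations is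
reducible. -/
theorem stmt11
    (S0 S1 : lp (fun _ : ℤ => ℂ) 2 →L[ℂ] lp (fun _ : ℤ => ℂ) 2)
    (hS0 : ∀ (ξ : lp (fun _ : ℤ => ℂ) 2) (l : ℤ),
      (S0 ξ : ∀ _ : ℤ, ℂ) (2 * l) = ((Real.sqrt 2 : ℂ))⁻¹ * ξ l ∧
      (S0 ξ : ∀ _ : ℤ, ℂ) (2 * l + 1) = ((Real.sqrt 2 : ℂ))⁻¹ * ξ l)
    (hS1 : ∀ (ξ : lp (fun _ : ℤ => ℂ) 2) (l : ℤ),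
      (S1 ξ : ∀ _ : ℤ, ℂ) (2 * l) = ((Real.sqrt 2 : ℂ))⁻¹ * ξ l ∧
      (S1 ξ : ∀ _ : ℤ, ℂ) (2 * l + 1) = -(((Real.sqrt 2 : ℂ))⁻¹ * ξ l))
    (H0 : Set (lp (fun _ : ℤ => ℂ) 2))
    (hH0 : H0 = {ξ : lp (fun _ : ℤ => ℂ) 2 | ∀ k : ℤ, k < 0 → ξ k = 0}) :
    IsClosed H0 ∧
    (∀ ξ ∈ H0, S0 ξ ∈ H0) ∧
    (∀ ξ ∈ H0, S1 ξ ∈ H0) ∧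
    (∀ ξ ∈ H0, ContinuousLinearMap.adjoint S0 ξ ∈ H0) ∧
    (∀ ξ ∈ H0, ContinuousLinearMap.adjoint S1 ξ ∈ H0) ∧
    (∃ ξ ∈ H0, ξ ≠ 0) ∧
    H0 ≠ Set.univ := by
  have hS1' : ∀ ξ l, S1 ξ (2 * l) = (√2 : ℂ)⁻¹ * ξ l ∧ S1 ξ (2 * l + 1) = -(√2 : ℂ)⁻¹ * ξ l :=
    fun ξ l => ⟨(hS1 ξ l).1, by rw [(hS1 ξ l).2, neg_mul]⟩
  have hneg : ∀ n ∈ Set.Iio (0 : ℤ), n / 2 ∈ Set.Iio 0 := fun n (hn : n < 0) =>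
    show n / 2 < 0 by omega
  have hnonneg : ∀ n ∈ Set.Ici (0 : ℤ), n / 2 ∈ Set.Ici 0 := fun n (hn : 0 ≤ n) =>
    show 0 ≤ n / 2 by omega
  have hH : H0 = lp.vanishingOn (𝕜 := ℂ) (Set.Iio (0 : ℤ)) := by
    rw [hH0]; rfl
  have hperp : lp.vanishingOn (Set.Iio (0 : ℤ)) = (lp.vanishingOn (𝕜 := ℂ) (Set.Ici (0 : ℤ)))ᗮ := by
    rw [lp.vanishingOn_orthogonal, Set.compl_Ici]
  subst hH
  refine ⟨?_, fun ξ => apply_mem_vanishingOn_of_dyadic hS0 hneg,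
    fun ξ => apply_mem_vanishingOn_of_dyadic hS1' hneg, ?_, ?_, ?_, ?_⟩
  · rw [hperp]
    exact Submodule.isClosed_orthogonal _
  · rw [hperp]
    exact fun ξ => ContinuousLinearMap.adjoint_mem_orthogonal
      (fun η => apply_mem_vanishingOn_of_dyadic hS0 hnonneg)
  · rw [hperp]
    exact fun ξ => ContinuousLinearMap.adjoint_mem_orthogonal
      (fun η => apply_mem_vanishingOn_of_dyadic hS1' hnonneg)
  · exact (Submodule.ne_bot_iff _).1 (lp.vanishingOn_ne_bot ⟨0, by simp⟩)
  · exact fun h => lp.vanishingOn_ne_top ⟨-1, by simp⟩ (Submodule.coe_eq_univ.1 h)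
end

section
/- Let g ≥ 1 and let a_0, …, a_{2g−1} be complex numbers. Suppose φ ∈ L²(ℝ), φ ≠ 0, has compact (essential) support and satisfies the refinement equation φ(x) = Σ_{k=0}^{2g−1} a_k φ(2x − k) for almost every x ∈ ℝ. Then the essential support of φ is contained in the interval [0, 2g−1]. -/
/-!
If `φ` vanishes a.e. outside `[A, B]`, the refinement equation shows that it vanishes a.e.
outside `[A / 2, (B + N - 1) / 2]`, since `2x - k ∈ [A, B]` with `0 ≤ k ≤ N - 1` forces `x` into
that interval. This map of intervals contracts towards its fixed interval `[0, N - 1]`, so iterating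
it from the compact support of `φ` squeezes the support into `[0, N - 1]`.
-/

open MeasureTheory

namespace Refinement

def AEVanishesOutside {α E : Type*} [MeasurableSpace α] [Zero E] (μ : Measure α) (f : α → E)
    (s : Set α) : Prop :=
  ∀ᵐ x ∂μ, x ∉ s → f x = 0

lemma quasiMeasurePreserving_mul_sub {c : ℝ} (hc : c ≠ 0) (k : ℝ) :
    Measure.QuasiMeasurePreserving (fun x : ℝ => c * x - k) volume volume := by
  simpa [Function.comp_def, smul_eq_mul] using
    (measurePreserving_sub_right volume k).quasiMeasurePreserving.comp
      (Measure.quasiMeasurePreserving_smul volume hc)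

section

variable {E : Type*} [Zero E] {f : ℝ → E}

lemma AEVanishesOutside.comp_mul_sub {s : Set ℝ} (h : AEVanishesOutside volume f s) {c : ℝ}
    (hc : c ≠ 0) (k : ℝ) :
    AEVanishesOutside volume (fun x => f (c * x - k)) ((fun x => c * x - k) ⁻¹' s) :=
  (quasiMeasurePreserving_mul_sub hc k).ae h

lemma aeVanishesOutside_Icc_of_tendsto {u v : ℕ → ℝ} {a b : ℝ}
    (hu : Filter.Tendsto u Filter.atTop (nhds a)) (hv : Filter.Tendsto v Filter.atTop (nhds b))
    (h : ∀ n, AEVanishesOutside volume f (Set.Icc (u n) (v n))) :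
    AEVanishesOutside volume f (Set.Icc a b) := by
  filter_upwards [ae_all_iff.2 h] with x hx hxo
  rcases not_and_or.1 hxo with hlt | hgt
  · obtain ⟨n, hn⟩ := (hu.eventually (lt_mem_nhds (not_le.1 hlt))).exists
    exact hx n fun hmem => (not_le.2 hn) hmem.1
  · obtain ⟨n, hn⟩ := (hv.eventually (gt_mem_nhds (not_le.1 hgt))).exists
    exact hx n fun hmem => (not_le.2 hn) hmem.2

end

lemma tendsto_div_two_pow (c : ℝ) :
    Filter.Tendsto (fun n : ℕ => c / 2 ^ n) Filter.atTop (nhds 0) :=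
  tendsto_const_nhds.div_atTop (tendsto_pow_atTop_atTop_of_one_lt one_lt_two)

variable {N : ℕ} {a : ℕ → ℂ} {φ : ℝ → ℂ}

lemma aeVanishesOutside_Icc_half
    (href : ∀ᵐ x : ℝ, φ x = ∑ k ∈ Finset.range N, a k * φ (2 * x - k))
    {A B : ℝ} (h : AEVanishesOutside volume φ (Set.Icc A B)) :
    AEVanishesOutside volume φ (Set.Icc (A / 2) ((B + (N - 1)) / 2)) := by
  have hshift : ∀ᵐ x : ℝ, ∀ k ∈ Finset.range N, 2 * x - k ∉ Set.Icc A B → φ (2 * x - k) = 0 :=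
    (ae_ball_iff (Finset.range N).countable_toSet).2
      fun k _ => h.comp_mul_sub two_ne_zero k
  filter_upwards [href, hshift] with x hx hxk hxo
  rw [hx]
  refine Finset.sum_eq_zero fun k hk => ?_
  have hkN : (k : ℝ) + 1 ≤ N := by exact_mod_cast Finset.mem_range.1 hk
  have hout : 2 * x - k ∉ Set.Icc A B := by
    simp only [Set.mem_Icc, not_and_or, not_le] at hxo ⊢
    rcases hxo with hlt | hgt
    · left; linarith [(k.cast_nonneg : (0 : ℝ) ≤ k)]
    · right; linarith
  rw [hxk k hk hout, mul_zero]

lemma aeVanishesOutside_Icc_iterate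
    (href : ∀ᵐ x : ℝ, φ x = ∑ k ∈ Finset.range N, a k * φ (2 * x - k))
    {A B : ℝ} (h : AEVanishesOutside volume φ (Set.Icc A B)) (n : ℕ) :
    AEVanishesOutside volume φ (Set.Icc (A / 2 ^ n) ((N - 1) + (B - (N - 1)) / 2 ^ n)) := by
  induction n with
  | zero => simpa using h
  | succ n ih =>
    have hA : A / 2 ^ n / 2 = A / 2 ^ (n + 1) := by ring
    have hB : ((N - 1) + (B - (N - 1)) / 2 ^ n + (N - 1)) / 2
        = (N - 1) + (B - (N - 1)) / 2 ^ (n + 1) := by ring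
    simpa only [hA, hB] using aeVanishesOutside_Icc_half href ih

theorem aeVanishesOutside_Icc_zero_of_refinement
    (href : ∀ᵐ x : ℝ, φ x = ∑ k ∈ Finset.range N, a k * φ (2 * x - k))
    {A B : ℝ} (h : AEVanishesOutside volume φ (Set.Icc A B)) :
    AEVanishesOutside volume φ (Set.Icc 0 (N - 1)) := by
  have hv := (tendsto_div_two_pow (B - (N - 1))).const_add ((N : ℝ) - 1)
  rw [add_zero] at hv
  exact aeVanishesOutside_Icc_of_tendsto (tendsto_div_two_pow A) hv
    (aeVanishesOutside_Icc_iterate href h)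

end Refinement

open Refinement in
theorem stmt13_general (g : ℕ) (a : ℕ → ℂ) (φ : ℝ → ℂ)
    (hcpt : ∃ R : ℝ, ∀ᵐ x : ℝ, x ∉ Set.Icc (-R) R → φ x = 0)
    (href : ∀ᵐ x : ℝ, φ x = ∑ k ∈ Finset.range (2 * g), a k * φ (2 * x - k)) :
    ∀ᵐ x : ℝ, x ∉ Set.Icc (0 : ℝ) (2 * g - 1) → φ x = 0 := by
  obtain ⟨R, hR⟩ := hcpt
  exact_mod_cast aeVanishesOutside_Icc_zero_of_refinement href hR

/-- If `φ ∈ L²(ℝ)`, `φ ≠ 0`, has compact essential support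
and satisfies the refinement equation `φ(x) = ∑_{k=0}^{2g−1} aₖ φ(2x − k)`
a.e., then `φ` vanishes a.e. outside `[0, 2g−1]`, i.e. the essential support of
`φ` is contained in `[0, 2g−1]`. -/
theorem stmt13 (g : ℕ) (hg : 1 ≤ g) (a : ℕ → ℂ) (φ : ℝ → ℂ)
    (hφ : MemLp φ 2 (volume : Measure ℝ))
    (hne : ¬ (φ =ᵐ[volume] (0 : ℝ → ℂ)))
    (hcpt : ∃ R : ℝ, ∀ᵐ x : ℝ, x ∉ Set.Icc (-R) R → φ x = 0)
    (href : ∀ᵐ x : ℝ, φ x = ∑ k ∈ Finset.range (2 * g), a k * φ (2 * x - k)) :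
    ∀ᵐ x : ℝ, x ∉ Set.Icc (0 : ℝ) (2 * g - 1) → φ x = 0 :=
  stmt13_general g a φ hcpt href
end

section
/- Let φ ∈ L²(ℝ), let 𝒱_0 ⊆ L²(ℝ) be the closed linear span of { φ(· − k) : k ∈ ℤ }, and let U : L²(ℝ) → L²(ℝ) be the unitary operator (Uf)(x) = 2^{−1/2} f(x/2). Assume that the family { φ(· − k) : k ∈ ℤ } is a frame for 𝒱_0, i.e., there exist constants 0 < c_1 ≤ c_2 such that c_1‖f‖² ≤ Σ_{k∈ℤ} |⟨φ(·−k), f⟩|² ≤ c_2‖f‖² for all f ∈ 𝒱_0. Then ⋂_{n≥0} U^n 𝒱_0 = {0}. -/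
/-!
If `f = Uⁿ gₙ` with `gₙ ∈ 𝒱₀` for every `n`, then, `U` being an isometry, the lower frame bound
gives `c₁ ‖f‖² ≤ ∑ₖ |⟨Uⁿ φ(· - k), f⟩|²` for all `n`, so it suffices that the right side tends to
`0`. Precomposing the upper frame bound with the orthogonal projection onto `𝒱₀` makes every family
`(Uⁿ φ(· - k))ₖ` Bessel with the same bound `c₂`, so it is enough to check the limit for `f`
supported in some `[-R, R]`. There Cauchy–Schwarz bounds the `k`-th term by `‖f‖²` times the mass
of `|φ|²` on an interval of length `2R / 2ⁿ` at `-k`; for large `n` these intervals are disjoint and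
shrink to the integers, a null set, so their total mass tends to `0`.
-/

open MeasureTheory Filter Function Set Topology
open scoped ComplexConjugate InnerProductSpace

noncomputable section

section Bessel

variable (𝕜 : Type*) {E F ι : Type*} [RCLike 𝕜] [NormedAddCommGroup E] [InnerProductSpace 𝕜 E]
  [NormedAddCommGroup F] [InnerProductSpace 𝕜 F]

def besselSum (v : ι → E) (f : E) : ℝ := ∑' k, ‖⟪v k, f⟫_𝕜‖ ^ 2

def IsBessel (v : ι → E) (C : ℝ) : Prop :=
  ∀ f, Summable (fun k => ‖⟪v k, f⟫_𝕜‖ ^ 2) ∧ besselSum 𝕜 v f ≤ C * ‖f‖ ^ 2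

variable {𝕜} {v : ι → E} {C : ℝ}

lemma besselSum_nonneg (f : E) : 0 ≤ besselSum 𝕜 v f :=
  tsum_nonneg fun _ => sq_nonneg _

lemma summable_of_mul_norm_sq_le_besselSum {c : ℝ} (hc : 0 < c) {f : E}
    (h : c * ‖f‖ ^ 2 ≤ besselSum 𝕜 v f) : Summable (fun k => ‖⟪v k, f⟫_𝕜‖ ^ 2) := by
  by_cases hf : f = 0
  · simp [hf]
  by_contra hs
  rw [besselSum, tsum_eq_zero_of_not_summable hs] at h
  have : 0 < c * ‖f‖ ^ 2 := by positivity
  linarith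

lemma IsBessel.mono (hv : IsBessel 𝕜 v C) {D : ℝ} (hCD : C ≤ D) : IsBessel 𝕜 v D :=
  fun f => ⟨(hv f).1, (hv f).2.trans (by gcongr)⟩

lemma IsBessel.of_submodule (K : Submodule 𝕜 E) [K.HasOrthogonalProjection] (hv : ∀ k, v k ∈ K)
    (hC : 0 ≤ C)
    (hK : ∀ f ∈ K, Summable (fun k => ‖⟪v k, f⟫_𝕜‖ ^ 2) ∧ besselSum 𝕜 v f ≤ C * ‖f‖ ^ 2) :
    IsBessel 𝕜 v C := by
  intro f
  have hproj : ∀ k, ⟪v k, K.starProjection f⟫_𝕜 = ⟪v k, f⟫_𝕜 := fun k => by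
    rw [← K.inner_starProjection_left_eq_right, K.starProjection_eq_self_iff.mpr (hv k)]
  obtain ⟨hs, hle⟩ := hK _ (K.starProjection_apply_mem f)
  simp only [besselSum, hproj] at hs hle
  refine ⟨hs, hle.trans ?_⟩
  gcongr
  exact K.norm_starProjection_apply_le f

lemma IsBessel.of_frame (K : Submodule 𝕜 E) [K.HasOrthogonalProjection] (hv : ∀ k, v k ∈ K)
    {c : ℝ} (hc : 0 < c) (hcC : c ≤ C)
    (hK : ∀ f ∈ K, c * ‖f‖ ^ 2 ≤ besselSum 𝕜 v f ∧ besselSum 𝕜 v f ≤ C * ‖f‖ ^ 2) :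
    IsBessel 𝕜 v C :=
  .of_submodule K hv (hc.le.trans hcC) fun f hf =>
    ⟨summable_of_mul_norm_sq_le_besselSum hc (hK f hf).1, (hK f hf).2⟩

lemma IsBessel.comp_continuousLinearMap [CompleteSpace E] [CompleteSpace F] (hv : IsBessel 𝕜 v C)
    (hC : 0 ≤ C) (T : E →L[𝕜] F) : IsBessel 𝕜 (fun k => T (v k)) (C * ‖T‖ ^ 2) := by
  intro f
  have hadj : ∀ k, ⟪T (v k), f⟫_𝕜 = ⟪v k, T.adjoint f⟫_𝕜 := fun k =>
    (T.adjoint_inner_right _ _).symm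
  obtain ⟨hs, hle⟩ := hv (T.adjoint f)
  simp only [besselSum, hadj] at hs hle ⊢
  refine ⟨hs, hle.trans ?_⟩
  calc C * ‖T.adjoint f‖ ^ 2 ≤ C * (‖T‖ * ‖f‖) ^ 2 := by
        gcongr
        simpa using T.adjoint.le_opNorm f
    _ = C * ‖T‖ ^ 2 * ‖f‖ ^ 2 := by ring

lemma besselSum_add_le (hv : IsBessel 𝕜 v C) (f g : E) :
    besselSum 𝕜 v (f + g) ≤ 2 * besselSum 𝕜 v f + 2 * besselSum 𝕜 v g := by
  have hterm : ∀ k, ‖⟪v k, f + g⟫_𝕜‖ ^ 2 ≤ 2 * ‖⟪v k, f⟫_𝕜‖ ^ 2 + 2 * ‖⟪v k, g⟫_𝕜‖ ^ 2 :=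
    fun k => calc
      ‖⟪v k, f + g⟫_𝕜‖ ^ 2 ≤ (‖⟪v k, f⟫_𝕜‖ + ‖⟪v k, g⟫_𝕜‖) ^ 2 := by
        rw [inner_add_right]; gcongr; exact norm_add_le _ _
      _ ≤ _ := by linarith [add_sq_le (a := ‖⟪v k, f⟫_𝕜‖) (b := ‖⟪v k, g⟫_𝕜‖)]
  have hsf := (hv f).1.mul_left 2
  have hsg := (hv g).1.mul_left 2
  rw [besselSum, besselSum, besselSum, ← tsum_mul_left, ← tsum_mul_left, ← hsf.tsum_add hsg]
  exact (hv _).1.tsum_le_tsum hterm (hsf.add hsg)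

lemma tendsto_besselSum_of_dense {w : ℕ → ι → E} (hw : ∀ n, IsBessel 𝕜 (w n) C) {D : Set E}
    (hD : Dense D) (hdecay : ∀ θ ∈ D, Tendsto (fun n => besselSum 𝕜 (w n) θ) atTop (𝓝 0))
    (f : E) : Tendsto (fun n => besselSum 𝕜 (w n) f) atTop (𝓝 0) := by
  refine tendsto_order.2 ⟨fun a ha => Eventually.of_forall fun n =>
    ha.trans_le (besselSum_nonneg f), fun ε hε => ?_⟩
  obtain ⟨θ, hθD, hθ⟩ : ∃ θ ∈ D, 2 * (C * ‖f - θ‖ ^ 2) < ε / 2 :=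
    hD.exists_mem_open (U := {θ | 2 * (C * ‖f - θ‖ ^ 2) < ε / 2})
      (isOpen_lt (by fun_prop) continuous_const) ⟨f, by simpa using half_pos hε⟩
  filter_upwards [(hdecay θ hθD).eventually (gt_mem_nhds (by positivity : (0 : ℝ) < ε / 4))]
    with n hn
  calc besselSum 𝕜 (w n) f = besselSum 𝕜 (w n) (θ + (f - θ)) := by rw [add_sub_cancel]
    _ ≤ 2 * besselSum 𝕜 (w n) θ + 2 * besselSum 𝕜 (w n) (f - θ) := besselSum_add_le (hw n) _ _
    _ ≤ 2 * besselSum 𝕜 (w n) θ + 2 * (C * ‖f - θ‖ ^ 2) := by gcongr; exact (hw n (f - θ)).2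
    _ < ε := by linarith

end Bessel

namespace MeasureTheory.L2

variable {α 𝕜 : Type*} [MeasurableSpace α] {μ : Measure α} [RCLike 𝕜]

lemma norm_sq_eq_integral_norm_sq (f : Lp 𝕜 2 μ) : ‖f‖ ^ 2 = ∫ x, ‖f x‖ ^ 2 ∂μ := by
  rw [← inner_self_eq_norm_sq (𝕜 := 𝕜), L2.inner_def, ← integral_re (L2.integrable_inner f f)]
  simp only [inner_self_eq_norm_sq]

lemma norm_inner_sq_le_setIntegral_mul (g h : Lp 𝕜 2 μ) {s : Set α} (hs : MeasurableSet s)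
    (hh : ∀ᵐ x ∂μ, x ∉ s → h x = 0) :
    ‖⟪g, h⟫_𝕜‖ ^ 2 ≤ (∫ x in s, ‖g x‖ ^ 2 ∂μ) * ‖h‖ ^ 2 := by
  have he := (Lp.memLp g).indicator hs
  have hinner : ⟪g, h⟫_𝕜 = ⟪he.toLp _, h⟫_𝕜 := by
    rw [L2.inner_def, L2.inner_def]
    refine integral_congr_ae ?_
    filter_upwards [he.coeFn_toLp, hh] with x hex hx
    by_cases hxs : x ∈ s
    · simp [hex, hxs]
    · simp [hx hxs]
  have hnorm : ‖he.toLp _‖ ^ 2 = ∫ x in s, ‖g x‖ ^ 2 ∂μ := by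
    rw [norm_sq_eq_integral_norm_sq, ← integral_indicator hs]
    refine integral_congr_ae ?_
    filter_upwards [he.coeFn_toLp] with x hx
    by_cases hxs : x ∈ s <;> simp [hx, hxs]
  calc ‖⟪g, h⟫_𝕜‖ ^ 2 ≤ (‖he.toLp _‖ * ‖h‖) ^ 2 := by
        rw [hinner]; gcongr; exact norm_inner_le_norm _ _
    _ = _ := by rw [mul_pow, hnorm]

end MeasureTheory.L2

lemma pairwise_disjoint_Ioc_sub_intCast {δ : ℝ} (hδ : δ ≤ 1 / 2) :
    Pairwise (Disjoint on fun k : ℤ => Ioc (-δ - k) (δ - k)) := by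
  intro j l hjl
  refine Set.disjoint_left.mpr fun x ⟨hj₁, hj₂⟩ ⟨hl₁, hl₂⟩ => hjl ?_
  have : |((j - l : ℤ) : ℝ)| < 1 := by
    rw [abs_lt]; push_cast; constructor <;> linarith
  rw [← Int.cast_abs, ← Int.cast_one, Int.cast_lt, Int.abs_lt_one_iff] at this
  omega

lemma eventually_notMem_iUnion_Ioc_sub_intCast {x : ℝ} (hx : x ∉ range (Int.cast : ℤ → ℝ)) :
    ∀ᶠ δ : ℝ in 𝓝 0, x ∉ ⋃ k : ℤ, Ioc (-δ - k) (δ - k) := by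
  have hd : 0 < |x - round x| := abs_pos.mpr (sub_ne_zero.mpr fun h => hx ⟨round x, h.symm⟩)
  filter_upwards [eventually_lt_nhds hd] with δ hδ
  simp only [mem_iUnion, mem_Ioc, not_exists, not_and]
  intro k hk₁ hk₂
  have hk' : |x - ((-k : ℤ) : ℝ)| ≤ δ := abs_le.2 ⟨by push_cast; linarith, by push_cast; linarith⟩
  linarith [round_le x (-k)]

lemma tendsto_setIntegral_iUnion_Ioc_sub_intCast {E : Type*} [NormedAddCommGroup E]
    [NormedSpace ℝ E] {p : ℝ → E} (hp : Integrable p) :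
    Tendsto (fun δ : ℝ => ∫ x in ⋃ k : ℤ, Ioc (-δ - k) (δ - k), p x) (𝓝 0) (𝓝 0) := by
  have hmeas : ∀ δ : ℝ, MeasurableSet (⋃ k : ℤ, Ioc (-δ - k) (δ - k)) :=
    fun δ => .iUnion fun k => measurableSet_Ioc
  simp_rw [← integral_indicator (hmeas _)]
  rw [← integral_zero ℝ E]
  refine tendsto_integral_filter_of_dominated_convergence (fun x => ‖p x‖)
    (.of_forall fun δ => hp.aestronglyMeasurable.indicator (hmeas δ))
    (.of_forall fun δ => .of_forall fun x => norm_indicator_le_norm_self _ _) hp.norm ?_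
  filter_upwards [(countable_range (Int.cast : ℤ → ℝ)).ae_notMem volume] with x hx
  refine tendsto_const_nhds.congr' ?_
  filter_upwards [eventually_notMem_iUnion_Ioc_sub_intCast hx] with δ hδ
  exact (indicator_of_notMem hδ p).symm

section Translates

variable {φ : ℝ → ℂ} (hφ : MemLp φ 2 (volume : Measure ℝ))

def translateLp (t : ℝ) : Lp ℂ 2 (volume : Measure ℝ) :=
  (hφ.comp_measurePreserving (measurePreserving_sub_right volume t)).toLp _

lemma coeFn_translateLp (t : ℝ) : ⇑(translateLp hφ t) =ᵐ[volume] fun x => φ (x - t) :=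
  MemLp.coeFn_toLp _

lemma inner_translateLp (t : ℝ) (f : Lp ℂ 2 (volume : Measure ℝ)) :
    ⟪translateLp hφ t, f⟫_ℂ = ∫ x, conj (φ (x - t)) * f x := by
  rw [L2.inner_def]
  refine integral_congr_ae ?_
  filter_upwards [coeFn_translateLp hφ t] with x hx
  rw [RCLike.inner_apply, hx, mul_comm]

end Translates

lemma quasiMeasurePreserving_div_const {a : ℝ} (ha : a ≠ 0) :
    Measure.QuasiMeasurePreserving (fun x : ℝ => x / a) volume volume := by
  refine ⟨measurable_id.div_const a, ?_⟩
  simp_rw [div_eq_inv_mul]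
  rw [Real.map_volume_mul_left (inv_ne_zero ha)]
  exact Measure.smul_absolutelyContinuous

lemma norm_inv_sqrt_two_pow_sq (n : ℕ) : ‖((Real.sqrt 2 : ℂ))⁻¹ ^ n‖ ^ 2 = (2 ^ n)⁻¹ := by
  rw [norm_pow, norm_inv, Complex.norm_real, Real.norm_of_nonneg (Real.sqrt_nonneg 2), ← pow_mul,
    mul_comm, pow_mul, inv_pow, Real.sq_sqrt zero_le_two, inv_pow]

def IsDyadicDilation (U : Lp ℂ 2 (volume : Measure ℝ) →L[ℂ] Lp ℂ 2 (volume : Measure ℝ)) :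
    Prop :=
  ∀ f, ⇑(U f) =ᵐ[volume] fun x => ((Real.sqrt 2 : ℂ))⁻¹ * f (x / 2)

namespace IsDyadicDilation

variable {U : Lp ℂ 2 (volume : Measure ℝ) →L[ℂ] Lp ℂ 2 (volume : Measure ℝ)}
  (hU : IsDyadicDilation U)
include hU

lemma coeFn_pow_apply (n : ℕ) (f : Lp ℂ 2 (volume : Measure ℝ)) :
    ⇑((U ^ n) f) =ᵐ[volume] fun x => ((Real.sqrt 2 : ℂ))⁻¹ ^ n * f (x / 2 ^ n) := by
  induction n with
  | zero => simp
  | succ n ih =>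
    rw [pow_succ', mul_apply_eq_comp]
    filter_upwards [hU ((U ^ n) f),
      (quasiMeasurePreserving_div_const two_ne_zero).ae_eq_comp ih] with x hx hcomp
    simp only [Function.comp_apply] at hcomp
    rw [hx, hcomp, div_div, ← pow_succ']
    ring

lemma norm_pow_apply (n : ℕ) (f : Lp ℂ 2 (volume : Measure ℝ)) : ‖(U ^ n) f‖ = ‖f‖ := by
  have h2n : (0 : ℝ) < 2 ^ n := by positivity
  refine (pow_left_inj₀ (norm_nonneg _) (norm_nonneg _) two_ne_zero).1 ?_
  calc ‖(U ^ n) f‖ ^ 2 = ∫ x, ‖((Real.sqrt 2 : ℂ))⁻¹ ^ n * f (x / 2 ^ n)‖ ^ 2 := by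
        rw [L2.norm_sq_eq_integral_norm_sq]
        refine integral_congr_ae ?_
        filter_upwards [hU.coeFn_pow_apply n f] with x hx
        rw [hx]
    _ = (2 ^ n)⁻¹ * ∫ x, ‖f (x / 2 ^ n)‖ ^ 2 := by
        simp_rw [norm_mul, mul_pow, norm_inv_sqrt_two_pow_sq]
        exact integral_const_mul _ _
    _ = ‖f‖ ^ 2 := by
        rw [Measure.integral_comp_div (fun y => ‖f y‖ ^ 2), abs_of_pos h2n, smul_eq_mul,
          inv_mul_cancel_left₀ h2n.ne', L2.norm_sq_eq_integral_norm_sq]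

lemma inner_pow_apply_pow_apply (n : ℕ) (f g : Lp ℂ 2 (volume : Measure ℝ)) :
    ⟪(U ^ n) f, (U ^ n) g⟫_ℂ = ⟪f, g⟫_ℂ :=
  (⟨(U ^ n).toLinearMap, hU.norm_pow_apply n⟩ :
    Lp ℂ 2 (volume : Measure ℝ) →ₗᵢ[ℂ] Lp ℂ 2 (volume : Measure ℝ)).inner_map_map f g

lemma norm_pow_le_one (n : ℕ) : ‖U ^ n‖ ≤ 1 :=
  ContinuousLinearMap.opNorm_le_bound _ zero_le_one fun f => by rw [hU.norm_pow_apply, one_mul]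

variable {φ : ℝ → ℂ} (hφ : MemLp φ 2 (volume : Measure ℝ))

lemma coeFn_pow_apply_translateLp (n : ℕ) (t : ℝ) :
    ⇑((U ^ n) (translateLp hφ t)) =ᵐ[volume]
      fun x => ((Real.sqrt 2 : ℂ))⁻¹ ^ n * φ (x / 2 ^ n - t) := by
  filter_upwards [hU.coeFn_pow_apply n _, (quasiMeasurePreserving_div_const
    (pow_ne_zero n two_ne_zero)).ae_eq_comp (coeFn_translateLp hφ t)] with x h₁ h₂
  simp only [Function.comp_apply] at h₂
  rw [h₁, h₂]

lemma norm_inner_pow_apply_translateLp_sq_le (n : ℕ) (t : ℝ) (θ : Lp ℂ 2 (volume : Measure ℝ))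
    {R : ℝ} (hR : 0 ≤ R) (hθ : ∀ᵐ x, x ∉ Icc (-R) R → θ x = 0) :
    ‖⟪(U ^ n) (translateLp hφ t), θ⟫_ℂ‖ ^ 2 ≤
      (∫ x in Ioc (-R / 2 ^ n - t) (R / 2 ^ n - t), ‖φ x‖ ^ 2) * ‖θ‖ ^ 2 := by
  refine (L2.norm_inner_sq_le_setIntegral_mul _ θ measurableSet_Icc hθ).trans_eq ?_
  have h2n : (0 : ℝ) < 2 ^ n := by positivity
  congr 1
  calc ∫ x in Icc (-R) R, ‖(U ^ n) (translateLp hφ t) x‖ ^ 2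
      = ∫ x in -R..R, (2 ^ n)⁻¹ * ‖φ (x / 2 ^ n - t)‖ ^ 2 := by
        rw [integral_Icc_eq_integral_Ioc, intervalIntegral.integral_of_le (by linarith)]
        refine setIntegral_congr_ae measurableSet_Ioc ?_
        filter_upwards [hU.coeFn_pow_apply_translateLp hφ n t] with x hx _
        rw [hx, norm_mul, mul_pow, norm_inv_sqrt_two_pow_sq]
    _ = _ := by
        rw [intervalIntegral.integral_const_mul,
          intervalIntegral.integral_comp_div_sub (fun x => ‖φ x‖ ^ 2) h2n.ne', smul_eq_mul,
          inv_mul_cancel_left₀ h2n.ne', intervalIntegral.integral_of_le]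
        have := div_le_div_of_nonneg_right (neg_le_self hR) h2n.le
        linarith

lemma tendsto_besselSum_pow_apply_translateLp {θ : Lp ℂ 2 (volume : Measure ℝ)} {g : ℝ → ℂ}
    (hθg : θ =ᵐ[volume] g) (hg : HasCompactSupport g) :
    Tendsto (fun n : ℕ => besselSum ℂ (fun k : ℤ => (U ^ n) (translateLp hφ k)) θ) atTop (𝓝 0) := by
  obtain ⟨R, hR, hgR⟩ := hg.isCompact.isBounded.exists_pos_norm_le
  have hθ : ∀ᵐ x, x ∉ Icc (-R) R → θ x = 0 := by
    filter_upwards [hθg] with x hx hxR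
    rw [hx]
    exact image_eq_zero_of_notMem_tsupport fun hx => hxR (abs_le.1 (hgR x hx))
  set δ : ℕ → ℝ := fun n => R / 2 ^ n
  have hδ : Tendsto δ atTop (𝓝 0) :=
    tendsto_const_nhds.div_atTop (tendsto_pow_atTop_atTop_of_one_lt one_lt_two)
  have hp : Integrable (fun x => ‖φ x‖ ^ 2) := hφ.integrable_norm_pow two_ne_zero
  have hsum : ∀ᶠ n in atTop, HasSum (fun k : ℤ => ∫ x in Ioc (-δ n - k) (δ n - k), ‖φ x‖ ^ 2)
      (∫ x in ⋃ k : ℤ, Ioc (-δ n - k) (δ n - k), ‖φ x‖ ^ 2) := by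
    filter_upwards [hδ.eventually (eventually_le_nhds one_half_pos)] with n hn
    exact hasSum_integral_iUnion (fun _ => measurableSet_Ioc) (pairwise_disjoint_Ioc_sub_intCast hn)
      hp.integrableOn
  have hlim := ((tendsto_setIntegral_iUnion_Ioc_sub_intCast hp).comp hδ).mul_const (‖θ‖ ^ 2)
  rw [zero_mul] at hlim
  refine squeeze_zero' (.of_forall fun n => besselSum_nonneg θ) ?_ hlim
  filter_upwards [hsum] with n hn
  have hterm : ∀ k : ℤ, ‖⟪(U ^ n) (translateLp hφ k), θ⟫_ℂ‖ ^ 2 ≤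
      (∫ x in Ioc (-δ n - k) (δ n - k), ‖φ x‖ ^ 2) * ‖θ‖ ^ 2 := fun k => by
    simpa only [δ, neg_div] using hU.norm_inner_pow_apply_translateLp_sq_le hφ n k θ hR.le hθ
  have hsumm := hn.summable.mul_right (‖θ‖ ^ 2)
  calc besselSum ℂ (fun k : ℤ => (U ^ n) (translateLp hφ k)) θ
      ≤ ∑' k : ℤ, (∫ x in Ioc (-δ n - k) (δ n - k), ‖φ x‖ ^ 2) * ‖θ‖ ^ 2 :=
        (hsumm.of_nonneg_of_le (fun _ => sq_nonneg _) hterm).tsum_le_tsum hterm hsumm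
    _ = _ := by rw [tsum_mul_right, hn.tsum_eq]; rfl

end IsDyadicDilation

/-- If the integer translates `{φ(· − k)}` form a frame for
the closed subspace `𝒱₀` they span, and `(Uf)(x) = 2^{-1/2} f(x/2)`, then
`⋂_{n≥0} Uⁿ𝒱₀ = {0}`. -/
theorem stmt15 (φ : ℝ → ℂ) (hφ : MemLp φ 2 (volume : Measure ℝ))
    (U : Lp ℂ 2 (volume : Measure ℝ) →L[ℂ] Lp ℂ 2 (volume : Measure ℝ))
    (hU : ∀ f : Lp ℂ 2 (volume : Measure ℝ),
      ⇑(U f) =ᵐ[volume] fun x => ((Real.sqrt 2 : ℂ))⁻¹ * f (x / 2))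
    (V0 : Set (Lp ℂ 2 (volume : Measure ℝ)))
    (hV0 : V0 = closure (Submodule.span ℂ
      {h : Lp ℂ 2 (volume : Measure ℝ) |
        ∃ k : ℤ, ⇑h =ᵐ[volume] fun x => φ (x - k)} : Set (Lp ℂ 2 (volume : Measure ℝ))))
    (c1 c2 : ℝ) (hc1 : 0 < c1) (hc12 : c1 ≤ c2)
    (hframe : ∀ f ∈ V0,
      c1 * ‖f‖ ^ 2 ≤ ∑' k : ℤ, ‖∫ x : ℝ, conj (φ (x - k)) * f x‖ ^ 2 ∧
      ∑' k : ℤ, ‖∫ x : ℝ, conj (φ (x - k)) * f x‖ ^ 2 ≤ c2 * ‖f‖ ^ 2) :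
    ⋂ n : ℕ, (⇑(U ^ n) '' V0) = {(0 : Lp ℂ 2 (volume : Measure ℝ))} := by
  replace hU : IsDyadicDilation U := hU
  set K := (Submodule.span ℂ {h : Lp ℂ 2 (volume : Measure ℝ) |
    ∃ k : ℤ, ⇑h =ᵐ[volume] fun x => φ (x - k)}).topologicalClosure
  have hV0K : V0 = K := by rw [hV0, Submodule.topologicalClosure_coe]
  set v : ℤ → Lp ℂ 2 (volume : Measure ℝ) := fun k => translateLp hφ k
  have hvK : ∀ k, v k ∈ K := fun k =>
    Submodule.le_topologicalClosure _ (Submodule.subset_span ⟨k, coeFn_translateLp hφ k⟩)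
  have hframe' : ∀ g ∈ V0, c1 * ‖g‖ ^ 2 ≤ besselSum ℂ v g ∧ besselSum ℂ v g ≤ c2 * ‖g‖ ^ 2 := by
    simpa only [besselSum, v, inner_translateLp] using hframe
  have hc2 : 0 ≤ c2 := hc1.le.trans hc12
  have hv : IsBessel ℂ v c2 := .of_frame K hvK hc1 hc12 fun g hg => hframe' g (hV0K ▸ hg)
  have hUv (n : ℕ) : IsBessel ℂ (fun k => (U ^ n) (v k)) c2 :=
    (hv.comp_continuousLinearMap hc2 _).mono
      (mul_le_of_le_one_right hc2 (pow_le_one₀ (norm_nonneg _) (hU.norm_pow_le_one n)))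
  have hdecay := tendsto_besselSum_of_dense hUv
    (Lp.dense_hasCompactSupport_contDiff ENNReal.ofNat_ne_top)
    fun θ ⟨g, hθg, hg, _⟩ => hU.tendsto_besselSum_pow_apply_translateLp hφ hθg hg
  have hlow (f) (hf : f ∈ ⋂ n : ℕ, (⇑(U ^ n) '' V0)) (n : ℕ) :
      c1 * ‖f‖ ^ 2 ≤ besselSum ℂ (fun k => (U ^ n) (v k)) f := by
    obtain ⟨g, hg, rfl⟩ := mem_iInter.1 hf n
    simpa only [besselSum, hU.norm_pow_apply, hU.inner_pow_apply_pow_apply] using (hframe' g hg).1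
  refine subset_antisymm (fun f hf => ?_) (singleton_subset_iff.2 (mem_iInter.2 fun n =>
    ⟨0, hV0K ▸ K.zero_mem, map_zero _⟩))
  have : c1 * ‖f‖ ^ 2 ≤ 0 := ge_of_tendsto' (hdecay f) (hlow f hf)
  rw [mem_singleton_iff, ← norm_eq_zero, ← pow_eq_zero_iff two_ne_zero]
  exact le_antisymm (nonpos_of_mul_nonpos_right this hc1) (sq_nonneg _)
end
end
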